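/- arXiv:0807.0764 — 11 statements merged into one kernel-verified Lean document; each statement's English description precedes it below -/
import Mathlib

section
/- Let λ > 0 and 1 < α ≤ 2. Define g : ℝ → ℝ by g(x) = e^{λx} for x ≤ 0 and g(x) = 0 for x > 0. For t ≥ 0 set h_t(z) = −1 if z ∈ (−t, 0] and h_t(z) = 0 otherwise; for t < 0 set h_t(z) = 1 if z ∈ (0, −t] and h_t(z) = 0 otherwise. Then for every t ∈ ℝ, lim_{r → 0⁺} ∫_ℝ |g(r(t+z)) − g(rz) − h_t(z)|^α dz = 0. -/
open MeasureTheory Filter Topology Set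

lemma exp_mul_integrableOn_Iic (c : ℝ) (hc : 0 < c) :
    IntegrableOn (fun z : ℝ => Real.exp (c * z)) (Set.Iic (0:ℝ)) := by
  have h1 : Integrable ((Set.Ioi (0:ℝ)).indicator (fun x => Real.exp (-c * x))) :=
    (integrable_indicator_iff measurableSet_Ioi).2 (exp_neg_integrableOn_Ioi 0 hc)
  have h2 := h1.comp_neg
  have h3 : (fun z : ℝ => (Set.Ioi (0:ℝ)).indicator (fun x => Real.exp (-c * x)) (-z))
      = (Set.Iio (0:ℝ)).indicator (fun z => Real.exp (c * z)) := by
    funext z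
    by_cases hz : z < 0
    · rw [Set.indicator_of_mem (show -z ∈ Set.Ioi (0:ℝ) by simpa using hz),
        Set.indicator_of_mem (show z ∈ Set.Iio (0:ℝ) from hz)]
      ring_nf
    · rw [Set.indicator_of_notMem (show -z ∉ Set.Ioi (0:ℝ) by simpa using hz),
        Set.indicator_of_notMem (show z ∉ Set.Iio (0:ℝ) from hz)]
  rw [h3] at h2
  have h4 : IntegrableOn (fun z : ℝ => Real.exp (c * z)) (Set.Iio (0:ℝ)) :=
    (integrable_indicator_iff measurableSet_Iio).1 h2
  exact h4.congr_set_ae Iio_ae_eq_Iic.symm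

lemma exp_mul_integral_Iic (c : ℝ) (hc : 0 < c) :
    ∫ z in Set.Iic (0:ℝ), Real.exp (c * z) = 1 / c := by
  have hderiv : ∀ x ∈ Set.Iic (0:ℝ), HasDerivAt (fun z => Real.exp (c * z) / c)
      (Real.exp (c * x)) x := by
    intro x _
    have h := (((hasDerivAt_id x).const_mul c).exp).div_const c
    rw [show Real.exp (c * x) = Real.exp (c * id x) * (c * 1) / c by simp [hc.ne']]
    exact h
  have htend : Tendsto (fun z => Real.exp (c * z) / c) atBot (𝓝 0) := by
    have h1 : Tendsto (fun z : ℝ => c * z) atBot atBot := tendsto_id.const_mul_atBot hc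
    have := (Real.tendsto_exp_atBot.comp h1).div_const c
    simpa using this
  have := integral_Iic_of_hasDerivAt_of_tendsto' hderiv (exp_mul_integrableOn_Iic c hc) htend
  simpa using this

set_option maxHeartbeats 1000000 in
lemma ptwise_bound (l α t r : ℝ) (hl : 0 < l) (hα : 0 < α) (hr0 : 0 < r) (hr1 : r ≤ 1)
    (g : ℝ → ℝ) (hg : ∀ x : ℝ, g x = if x ≤ 0 then Real.exp (l * x) else 0)
    (h : ℝ → ℝ → ℝ)
    (hh : ∀ t z : ℝ, h t z =
      if 0 ≤ t then (if z ∈ Set.Ioc (-t) 0 then -1 else 0)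
      else (if z ∈ Set.Ioc 0 (-t) then 1 else 0)) (z : ℝ) :
    |g (r * (t + z)) - g (r * z) - h t z| ^ α ≤
      (l * |t| * Real.exp (l * |t|) * r) ^ α *
        ((Set.Icc (-|t|) |t|).indicator (fun _ => (1:ℝ)) z
          + (Set.Iic (0:ℝ)).indicator (fun w => Real.exp (α * (l * r) * w)) z) := by
  set C : ℝ := l * |t| * Real.exp (l * |t|) * r with hC
  have hCnn : 0 ≤ C := by positivity
  have hind2nn : 0 ≤ (Set.Iic (0:ℝ)).indicator (fun w => Real.exp (α * (l * r) * w)) z :=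
    Set.indicator_nonneg (fun w _ => (Real.exp_pos _).le) z
  have hind1nn : 0 ≤ (Set.Icc (-|t|) |t|).indicator (fun _ => (1:ℝ)) z :=
    Set.indicator_nonneg (fun w _ => zero_le_one) z
  -- two generic closing steps
  have key1 : ∀ b : ℝ, |b| ≤ C → z ∈ Set.Icc (-|t|) |t| →
      |b| ^ α ≤ C ^ α *
        ((Set.Icc (-|t|) |t|).indicator (fun _ => (1:ℝ)) z
          + (Set.Iic (0:ℝ)).indicator (fun w => Real.exp (α * (l * r) * w)) z) := by
    intro b hb hz
    have h1 : |b| ^ α ≤ C ^ α := Real.rpow_le_rpow (abs_nonneg _) hb hα.le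
    have h2 : (1:ℝ) ≤ (Set.Icc (-|t|) |t|).indicator (fun _ => (1:ℝ)) z
          + (Set.Iic (0:ℝ)).indicator (fun w => Real.exp (α * (l * r) * w)) z := by
      rw [Set.indicator_of_mem hz]
      linarith
    calc |b| ^ α ≤ C ^ α := h1
      _ = C ^ α * 1 := by ring
      _ ≤ _ := by
          exact mul_le_mul_of_nonneg_left h2 (Real.rpow_nonneg hCnn _)
  have key2 : ∀ b : ℝ, |b| ≤ C * Real.exp (l * r * z) → z ≤ 0 →
      |b| ^ α ≤ C ^ α *
        ((Set.Icc (-|t|) |t|).indicator (fun _ => (1:ℝ)) z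
          + (Set.Iic (0:ℝ)).indicator (fun w => Real.exp (α * (l * r) * w)) z) := by
    intro b hb hz
    have h1 : |b| ^ α ≤ (C * Real.exp (l * r * z)) ^ α :=
      Real.rpow_le_rpow (abs_nonneg _) hb hα.le
    have h2 : (C * Real.exp (l * r * z)) ^ α = C ^ α * Real.exp (α * (l * r) * z) := by
      rw [Real.mul_rpow hCnn (Real.exp_pos _).le, ← Real.exp_mul]
      ring_nf
    have h3 : (Set.Iic (0:ℝ)).indicator (fun w => Real.exp (α * (l * r) * w)) z
        = Real.exp (α * (l * r) * z) :=
      Set.indicator_of_mem (show z ∈ Set.Iic (0:ℝ) from hz) _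
    calc |b| ^ α ≤ C ^ α * Real.exp (α * (l * r) * z) := by rw [← h2]; exact h1
      _ ≤ _ := by
          rw [h3]
          nlinarith [Real.rpow_nonneg hCnn α, Real.exp_pos (α * (l * r) * z)]
  have hexp1 : ∀ x : ℝ, 1 - Real.exp x ≤ -x := fun x => by
    nlinarith [Real.add_one_le_exp x]
  have zero_case : (0:ℝ) ≤ C ^ α *
        ((Set.Icc (-|t|) |t|).indicator (fun _ => (1:ℝ)) z
          + (Set.Iic (0:ℝ)).indicator (fun w => Real.exp (α * (l * r) * w)) z) := by
    have := Real.rpow_nonneg hCnn α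
    nlinarith
  rcases le_or_gt 0 t with ht | ht
  · -- t ≥ 0, |t| = t
    have habs : |t| = t := abs_of_nonneg ht
    rcases lt_or_ge 0 z with hz | hz
    · -- z > 0 : everything 0
      have e1 : g (r * (t + z)) = 0 := by
        rw [hg]; rw [if_neg]; push_neg; positivity
      have e2 : g (r * z) = 0 := by
        rw [hg]; rw [if_neg]; push_neg; positivity
      have e3 : h t z = 0 := by
        rw [hh, if_pos ht, if_neg]
        intro hmem; exact absurd hmem.2 (not_le.2 hz)
      rw [e1, e2, e3]
      simp only [sub_zero, sub_self, abs_zero]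
      rw [Real.zero_rpow hα.ne']
      exact zero_case
    · rcases lt_or_ge (-t) z with hz2 | hz2
      · -- -t < z ≤ 0
        have e1 : g (r * (t + z)) = 0 := by
          rw [hg]; rw [if_neg]; push_neg
          have : 0 < t + z := by linarith
          positivity
        have e2 : g (r * z) = Real.exp (l * (r * z)) := by
          rw [hg]; rw [if_pos (mul_nonpos_of_nonneg_of_nonpos hr0.le hz)]
        have e3 : h t z = -1 := by
          rw [hh, if_pos ht, if_pos ⟨hz2, hz⟩]
        rw [e1, e2, e3]
        have hb : |0 - Real.exp (l * (r * z)) - (-1)| ≤ C := by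
          have hle1 : Real.exp (l * (r * z)) ≤ 1 :=
            Real.exp_le_one_iff.2 (mul_nonpos_of_nonneg_of_nonpos hl.le
              (mul_nonpos_of_nonneg_of_nonpos hr0.le hz))
          have h2 := hexp1 (l * (r * z))
          have h3 : -(l * (r * z)) ≤ l * r * t := by
            have := mul_le_mul_of_nonneg_left (show -z ≤ t by linarith)
              (show (0:ℝ) ≤ l * r by positivity)
            nlinarith [this]
          have h4 : l * r * t ≤ C := by
            rw [hC, habs]
            have := mul_le_mul_of_nonneg_left
              (Real.one_le_exp (show 0 ≤ l * t by positivity))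
              (show (0:ℝ) ≤ l * r * t by positivity)
            nlinarith [this]
          rw [show (0 - Real.exp (l * (r * z)) - (-1))
              = 1 - Real.exp (l * (r * z)) by ring, abs_of_nonneg (by linarith)]
          linarith
        exact key1 _ hb ⟨by rw [habs]; linarith, by rw [habs]; linarith⟩
      · -- z ≤ -t
        have hz3 : z ≤ 0 := by linarith
        have e1 : g (r * (t + z)) = Real.exp (l * (r * (t + z))) := by
          rw [hg]; rw [if_pos]
          have : t + z ≤ 0 := by linarith
          exact mul_nonpos_of_nonneg_of_nonpos hr0.le this
        have e2 : g (r * z) = Real.exp (l * (r * z)) := by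
          rw [hg]; rw [if_pos]
          exact mul_nonpos_of_nonneg_of_nonpos hr0.le hz3
        have e3 : h t z = 0 := by
          rw [hh, if_pos ht, if_neg]
          intro hmem; exact absurd hmem.1 (not_lt.2 hz2)
        rw [e1, e2, e3]
        have hb : |Real.exp (l * (r * (t + z))) - Real.exp (l * (r * z)) - 0|
            ≤ C * Real.exp (l * r * z) := by
          have hfac : Real.exp (l * (r * (t + z))) - Real.exp (l * (r * z))
              = Real.exp (l * r * z) * (Real.exp (l * r * t) - 1) := by
            rw [mul_sub, ← Real.exp_add, mul_one]; ring_nf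
          rw [sub_zero, hfac, abs_mul, abs_of_pos (Real.exp_pos _),
            abs_of_nonneg (by nlinarith [Real.one_le_exp (show 0 ≤ l*r*t by positivity)])]
          have hkey : Real.exp (l * r * t) - 1 ≤ C / r * r := by
            -- e^x - 1 ≤ x e^x and monotonicity
            have hx : 0 ≤ l * r * t := by positivity
            have hinv : Real.exp (-(l*r*t)) * Real.exp (l*r*t) = 1 := by
              rw [← Real.exp_add]; simp
            have hub : Real.exp (l * r * t) - 1 ≤ (l * r * t) * Real.exp (l * r * t) := by
              nlinarith [Real.add_one_le_exp (-(l*r*t)), Real.exp_pos (l*r*t)]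
            have hmono : Real.exp (l * r * t) ≤ Real.exp (l * t) := by
              apply Real.exp_le_exp.2; nlinarith
            have : (l * r * t) * Real.exp (l * r * t) ≤ l * t * Real.exp (l * t) * r := by
              have := mul_le_mul_of_nonneg_left hmono (show (0:ℝ) ≤ l * r * t by positivity)
              nlinarith [this]
            rw [hC, habs]
            calc Real.exp (l * r * t) - 1 ≤ l * t * Real.exp (l * t) * r := by linarith
              _ = l * t * Real.exp (l * t) * r / r * r := by field_simp
          have hCr : C / r * r = C := by field_simp
          rw [hCr] at hkey
          have := mul_le_mul_of_nonneg_left hkey (Real.exp_pos (l * r * z)).le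
          nlinarith [this]
        exact key2 _ hb hz3
  · -- t < 0, |t| = -t
    have habs : |t| = -t := abs_of_neg ht
    rcases lt_or_ge (-t) z with hz | hz
    · -- z > -t > 0
      have hz0 : 0 < z := by linarith
      have e1 : g (r * (t + z)) = 0 := by
        rw [hg]; rw [if_neg]; push_neg
        have : 0 < t + z := by linarith
        positivity
      have e2 : g (r * z) = 0 := by
        rw [hg]; rw [if_neg]; push_neg; positivity
      have e3 : h t z = 0 := by
        rw [hh, if_neg (not_le.2 ht), if_neg]
        intro hmem; exact absurd hmem.2 (not_le.2 hz)
      rw [e1, e2, e3]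
      simp only [sub_zero, sub_self, abs_zero]
      rw [Real.zero_rpow hα.ne']
      exact zero_case
    · rcases lt_or_ge 0 z with hz2 | hz2
      · -- 0 < z ≤ -t
        have e1 : g (r * (t + z)) = Real.exp (l * (r * (t + z))) := by
          rw [hg]; rw [if_pos]
          have : t + z ≤ 0 := by linarith
          exact mul_nonpos_of_nonneg_of_nonpos hr0.le this
        have e2 : g (r * z) = 0 := by
          rw [hg]; rw [if_neg]; push_neg; positivity
        have e3 : h t z = 1 := by
          rw [hh, if_neg (not_le.2 ht), if_pos ⟨hz2, hz⟩]
        rw [e1, e2, e3]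
        have hb : |Real.exp (l * (r * (t + z))) - 0 - 1| ≤ C := by
          have harg : l * (r * (t + z)) ≤ 0 :=
            mul_nonpos_of_nonneg_of_nonpos hl.le
              (mul_nonpos_of_nonneg_of_nonpos hr0.le (by linarith))
          rw [sub_zero, abs_of_nonpos (by
            have := Real.exp_le_one_iff.2 harg; linarith)]
          have h2 := hexp1 (l * (r * (t + z)))
          have h3 : -(l * (r * (t + z))) ≤ l * r * (-t) := by
            have := mul_le_mul_of_nonneg_left (show -(t + z) ≤ -t by linarith)
              (show (0:ℝ) ≤ l * r by positivity)
            nlinarith [this]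
          have h4 : l * r * (-t) ≤ C := by
            rw [hC, habs]
            have := mul_le_mul_of_nonneg_left
              (Real.one_le_exp (show 0 ≤ l * -t by nlinarith))
              (show (0:ℝ) ≤ l * r * -t by nlinarith)
            nlinarith [this]
          linarith
        exact key1 _ hb ⟨by rw [habs]; linarith, by rw [habs]; linarith⟩
      · -- z ≤ 0
        have e1 : g (r * (t + z)) = Real.exp (l * (r * (t + z))) := by
          rw [hg]; rw [if_pos]
          have : t + z ≤ 0 := by linarith
          exact mul_nonpos_of_nonneg_of_nonpos hr0.le this
        have e2 : g (r * z) = Real.exp (l * (r * z)) := by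
          rw [hg]; rw [if_pos]
          exact mul_nonpos_of_nonneg_of_nonpos hr0.le hz2
        have e3 : h t z = 0 := by
          rw [hh, if_neg (not_le.2 ht), if_neg]
          intro hmem; exact absurd hmem.1 (not_lt.2 hz2)
        rw [e1, e2, e3]
        have hb : |Real.exp (l * (r * (t + z))) - Real.exp (l * (r * z)) - 0|
            ≤ C * Real.exp (l * r * z) := by
          have hfac : Real.exp (l * (r * (t + z))) - Real.exp (l * (r * z))
              = Real.exp (l * r * z) * (Real.exp (l * r * t) - 1) := by
            rw [mul_sub, ← Real.exp_add, mul_one]; ring_nf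
          have hle1 : Real.exp (l * r * t) ≤ 1 :=
            Real.exp_le_one_iff.2
              (mul_nonpos_of_nonneg_of_nonpos (by positivity) ht.le)
          rw [sub_zero, hfac, abs_mul, abs_of_pos (Real.exp_pos _),
            abs_of_nonpos (by linarith)]
          have h2 := hexp1 (l * r * t)
          have h4 : l * r * (-t) ≤ C := by
            rw [hC, habs]
            have := mul_le_mul_of_nonneg_left
              (Real.one_le_exp (show 0 ≤ l * -t by nlinarith))
              (show (0:ℝ) ≤ l * r * -t by nlinarith)
            nlinarith [this]
          have h5 : -(Real.exp (l * r * t) - 1) ≤ C := by linarith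
          have := mul_le_mul_of_nonneg_left h5 (Real.exp_pos (l * r * z)).le
          nlinarith [this]
        exact key2 _ hb hz2

/-- L^α convergence of rescaled increments of the reverse
Ornstein-Uhlenbeck kernel to the Lévy motion kernel. -/
theorem stmt_0 (l α : ℝ) (hl : 0 < l) (hα1 : 1 < α) (hα2 : α ≤ 2)
    (g : ℝ → ℝ) (hg : ∀ x : ℝ, g x = if x ≤ 0 then Real.exp (l * x) else 0)
    (h : ℝ → ℝ → ℝ)
    (hh : ∀ t z : ℝ, h t z =
      if 0 ≤ t then (if z ∈ Set.Ioc (-t) 0 then -1 else 0)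
      else (if z ∈ Set.Ioc 0 (-t) then 1 else 0)) :
    ∀ t : ℝ,
      Tendsto (fun r : ℝ => ∫ z : ℝ, |g (r * (t + z)) - g (r * z) - h t z| ^ α)
        (𝓝[>] 0) (𝓝 0) := by
  intro t
  set C0 : ℝ := l * |t| * Real.exp (l * |t|) with hC0def
  have hC0nn : 0 ≤ C0 := by positivity
  have hα0 : 0 < α := by linarith
  set B : ℝ → ℝ := fun r => (C0 ^ α * (2 * |t|)) * r ^ α + (C0 ^ α / (α * l)) * r ^ (α - 1)
    with hBdef
  have hB : Tendsto B (𝓝[>] 0) (𝓝 0) := by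
    have hpow : ∀ p : ℝ, 0 < p → Tendsto (fun r : ℝ => r ^ p) (𝓝[>] (0:ℝ)) (𝓝 0) := by
      intro p hp
      have hcont : ContinuousAt (fun r : ℝ => r ^ p) 0 :=
        Real.continuousAt_rpow_const 0 p (Or.inr hp.le)
      have h2 : Tendsto (fun r : ℝ => r ^ p) (𝓝[Set.Ioi 0] 0) (𝓝 ((0:ℝ) ^ p)) :=
        hcont.continuousWithinAt
      rwa [Real.zero_rpow hp.ne'] at h2
    have h1 := (hpow α hα0).const_mul (C0 ^ α * (2 * |t|))
    have h2 := (hpow (α - 1) (by linarith)).const_mul (C0 ^ α / (α * l))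
    have h3 := h1.add h2
    simpa using h3
  apply tendsto_of_tendsto_of_tendsto_of_le_of_le' tendsto_const_nhds hB
  · filter_upwards with r
    exact integral_nonneg fun z => Real.rpow_nonneg (abs_nonneg _) _
  · filter_upwards [Ioc_mem_nhdsGT (zero_lt_one)] with r hr
    obtain ⟨hr0, hr1⟩ := hr
    have hclr : 0 < α * (l * r) := by positivity
    set ψ : ℝ → ℝ := fun z => (C0 * r) ^ α *
        ((Set.Icc (-|t|) |t|).indicator (fun _ => (1:ℝ)) z
          + (Set.Iic (0:ℝ)).indicator (fun w => Real.exp (α * (l * r) * w)) z) with hψ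
    have hi1 : Integrable ((Set.Icc (-|t|) |t|).indicator (fun _ => (1:ℝ))) :=
      (integrable_indicator_iff measurableSet_Icc).2
        (integrableOn_const measure_Icc_lt_top.ne)
    have hi2 : Integrable ((Set.Iic (0:ℝ)).indicator (fun w => Real.exp (α * (l * r) * w))) :=
      (integrable_indicator_iff measurableSet_Iic).2 (exp_mul_integrableOn_Iic _ hclr)
    have hψint : Integrable ψ := ((hi1.add hi2).const_mul _)
    have hmono : (∫ z : ℝ, |g (r * (t + z)) - g (r * z) - h t z| ^ α) ≤ ∫ z, ψ z := by
      apply integral_mono_of_nonneg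
      · exact ae_of_all _ fun z => Real.rpow_nonneg (abs_nonneg _) _
      · exact hψint
      · exact ae_of_all _ fun z => ptwise_bound l α t r hl hα0 hr0 hr1 g hg h hh z
    have hval : ∫ z, ψ z = (C0 * r) ^ α * (2 * |t| + 1 / (α * (l * r))) := by
      rw [hψ]
      rw [integral_const_mul, integral_add hi1 hi2,
        integral_indicator measurableSet_Icc, setIntegral_const,
        integral_indicator measurableSet_Iic, exp_mul_integral_Iic _ hclr,
        Real.volume_real_Icc_of_le (by linarith [abs_nonneg t] : -|t| ≤ |t|)]
      rw [smul_eq_mul, mul_one]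
      ring_nf
    have hfin : (C0 * r) ^ α * (2 * |t| + 1 / (α * (l * r))) = B r := by
      have hrs : r ^ (α - 1) = r ^ α / r := Real.rpow_sub_one hr0.ne' α
      rw [Real.mul_rpow hC0nn hr0.le, hBdef]
      simp only []
      rw [hrs]
      field_simp
    calc (∫ z : ℝ, |g (r * (t + z)) - g (r * z) - h t z| ^ α) ≤ ∫ z, ψ z := hmono
      _ = _ := hval
      _ = B r := hfin
end

section
/- Let λ > 0 and α ≥ 1. Define g : ℝ → ℝ by g(x) = e^{λx} for x ≤ 0 and g(x) = 0 for x > 0. Then there exist constants c > 0 and η > 0 such that for all h ∈ ℝ with |h| ≤ η, ∫_ℝ |g(h − x) − g(−x)|^α dx ≤ c|h|. -/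
open MeasureTheory Filter Topology Set

lemma aux_integral_exp (l : ℝ) (hl : 0 < l) :
    ∫ x in Ioi (0:ℝ), Real.exp (-(l * x)) = 1 / l := by
  have hderiv : ∀ x ∈ Ici (0:ℝ),
      HasDerivAt (fun a => -Real.exp (-(l * a)) / l) (Real.exp (-(l * x))) x := by
    intro x _
    have h := (ProbabilityTheory.hasDerivAt_neg_exp_mul_exp (r := l) (x := x)).div_const l
    rwa [mul_div_cancel_left₀ _ hl.ne'] at h
  have hint : IntegrableOn (fun x => Real.exp (-(l * x))) (Ioi (0:ℝ)) := by
    simpa [neg_mul] using exp_neg_integrableOn_Ioi (0:ℝ) hl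
  have htend : Tendsto (fun a => -Real.exp (-(l * a)) / l) atTop (nhds 0) := by
    have h1 : Tendsto (fun a : ℝ => -(l * a)) atTop atBot :=
      tendsto_neg_atBot_iff.2 (Tendsto.const_mul_atTop hl tendsto_id)
    have := (Real.tendsto_exp_atBot.comp h1).neg.div_const l
    simpa using this
  rw [integral_Ioi_of_hasDerivAt_of_tendsto' hderiv hint htend]
  simp [neg_div]

lemma aux_abs_exp_sub_one (a : ℝ) : |Real.exp a - 1| ≤ Real.exp |a| - 1 := by
  rcases le_total 0 a with h | h
  · rw [abs_of_nonneg h, abs_of_nonneg (by nlinarith [Real.one_le_exp h])]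
  · have h1 := Real.add_one_le_exp a
    have h2 := Real.add_one_le_exp (-a)
    rw [abs_of_nonpos h, abs_of_nonpos (by nlinarith [Real.exp_le_one_iff.mpr h])]
    linarith

/-- increment estimate for the reverse Ornstein-Uhlenbeck kernel. -/
theorem stmt_1 (l α : ℝ) (hl : 0 < l) (hα : 1 ≤ α)
    (g : ℝ → ℝ) (hg : ∀ x : ℝ, g x = if x ≤ 0 then Real.exp (l * x) else 0) :
    ∃ c > (0:ℝ), ∃ η > (0:ℝ), ∀ h : ℝ, |h| ≤ η →
      (∫ x : ℝ, |g (h - x) - g (-x)| ^ α) ≤ c * |h| := by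
  have hg01 : ∀ x : ℝ, 0 ≤ g x ∧ g x ≤ 1 := by
    intro x
    rw [hg x]
    split_ifs with hx
    · exact ⟨(Real.exp_pos _).le, Real.exp_le_one_iff.2 (by nlinarith)⟩
    · exact ⟨le_refl 0, zero_le_one⟩
  refine ⟨1 + Real.exp l, by positivity, 1, one_pos, fun h hh => ?_⟩
  set F : ℝ → ℝ := fun x => (uIcc (0:ℝ) h).indicator (fun _ => (1:ℝ)) x
      + (Real.exp (l * |h|) - 1) * (Ici (0:ℝ)).indicator (fun x => Real.exp (-(l * x))) x
      with hF
  have hcoef : 0 ≤ Real.exp (l * |h|) - 1 := by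
    nlinarith [Real.one_le_exp (by positivity : (0:ℝ) ≤ l * |h|)]
  -- integrability of F
  have hint1 : Integrable ((uIcc (0:ℝ) h).indicator (fun _ => (1:ℝ))) := by
    apply IntegrableOn.integrable_indicator _ measurableSet_uIcc
    exact integrableOn_const (by rw [Real.volume_interval]; exact ENNReal.ofReal_ne_top)
  have hint2 : Integrable ((Ici (0:ℝ)).indicator (fun x => Real.exp (-(l * x)))) := by
    apply IntegrableOn.integrable_indicator _ measurableSet_Ici
    rw [integrableOn_Ici_iff_integrableOn_Ioi]
    simpa [neg_mul] using exp_neg_integrableOn_Ioi (0:ℝ) hl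
  have hFint : Integrable F := hint1.add (hint2.const_mul _)
  -- pointwise bound
  have hpt : ∀ x : ℝ, |g (h - x) - g (-x)| ^ α ≤ F x := by
    intro x
    have hb0 : 0 ≤ |g (h - x) - g (-x)| := abs_nonneg _
    have hb1 : |g (h - x) - g (-x)| ≤ 1 := by
      have h1 := hg01 (h - x); have h2 := hg01 (-x)
      rw [abs_sub_le_iff]; constructor <;> linarith
    have hstep1 : |g (h - x) - g (-x)| ^ α ≤ |g (h - x) - g (-x)| := by
      rcases eq_or_lt_of_le hb0 with hb | hb
      · rw [← hb, Real.zero_rpow (by linarith)]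
      · calc |g (h - x) - g (-x)| ^ α ≤ |g (h - x) - g (-x)| ^ (1:ℝ) :=
              Real.rpow_le_rpow_of_exponent_ge hb hb1 hα
          _ = |g (h - x) - g (-x)| := Real.rpow_one _
    refine hstep1.trans ?_
    have hind2 : 0 ≤ (Real.exp (l * |h|) - 1)
        * (Ici (0:ℝ)).indicator (fun x => Real.exp (-(l * x))) x :=
      mul_nonneg hcoef (Set.indicator_nonneg (fun y _ => (Real.exp_pos _).le) x)
    by_cases hx : x ∈ uIcc (0:ℝ) h
    · have : F x = 1 + (Real.exp (l * |h|) - 1)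
          * (Ici (0:ℝ)).indicator (fun x => Real.exp (-(l * x))) x := by
        rw [hF]; simp [Set.indicator_of_mem hx]
      rw [this]; linarith
    · have hFx : F x = (Real.exp (l * |h|) - 1)
          * (Ici (0:ℝ)).indicator (fun x => Real.exp (-(l * x))) x := by
        rw [hF]; simp [Set.indicator_of_notMem hx]
      rw [hFx]
      have hxne : x ≠ 0 := fun hx0 => hx (hx0 ▸ left_mem_uIcc)
      rcases lt_or_gt_of_ne hxne with hx0 | hx0
      · -- x < 0; then x < h, so both g values vanish
        have hxh : x < h := by
          by_contra hcon
          exact hx (mem_uIcc.2 (Or.inr ⟨not_lt.1 hcon, hx0.le⟩))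
        have e1 : g (h - x) = 0 := by rw [hg]; rw [if_neg (by linarith)]
        have e2 : g (-x) = 0 := by rw [hg]; rw [if_neg (by linarith)]
        rw [e1, e2]; simpa using hind2
      · -- x > 0; then h < x
        have hxh : h < x := by
          by_contra hcon
          exact hx (mem_uIcc.2 (Or.inl ⟨hx0.le, not_lt.1 hcon⟩))
        have e1 : g (h - x) = Real.exp (l * (h - x)) := by rw [hg, if_pos (by linarith)]
        have e2 : g (-x) = Real.exp (l * (-x)) := by rw [hg, if_pos (by linarith)]
        have e3 : (Ici (0:ℝ)).indicator (fun x => Real.exp (-(l * x))) x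
            = Real.exp (-(l * x)) := Set.indicator_of_mem (le_of_lt hx0) _
        rw [e1, e2, e3]
        have ea : Real.exp (l * (h - x)) = Real.exp (l * h) * Real.exp (-(l * x)) := by
          rw [← Real.exp_add]; congr 1; ring
        have eb : Real.exp (l * (-x)) = Real.exp (-(l * x)) * 1 := by
          rw [mul_one]; congr 1; ring
        have key : |Real.exp (l * (h - x)) - Real.exp (l * (-x))|
            = Real.exp (-(l * x)) * |Real.exp (l * h) - 1| := by
          rw [ea, eb, show Real.exp (l * h) * Real.exp (-(l * x)) - Real.exp (-(l * x)) * 1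
              = Real.exp (-(l * x)) * (Real.exp (l * h) - 1) by ring,
            abs_mul, abs_of_pos (Real.exp_pos _)]
        rw [key]
        have hb : |Real.exp (l * h) - 1| ≤ Real.exp (l * |h|) - 1 := by
          have := aux_abs_exp_sub_one (l * h)
          rwa [abs_mul, abs_of_pos hl] at this
        calc Real.exp (-(l * x)) * |Real.exp (l * h) - 1|
            ≤ Real.exp (-(l * x)) * (Real.exp (l * |h|) - 1) :=
              mul_le_mul_of_nonneg_left hb (Real.exp_pos _).le
          _ = (Real.exp (l * |h|) - 1) * Real.exp (-(l * x)) := by ring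
  -- integral comparison
  have hmono : (∫ x : ℝ, |g (h - x) - g (-x)| ^ α) ≤ ∫ x, F x :=
    integral_mono_of_nonneg (ae_of_all _ fun x => by positivity) hFint (ae_of_all _ hpt)
  -- compute ∫ F
  have hval : (∫ x, F x) = |h| + (Real.exp (l * |h|) - 1) * (1 / l) := by
    rw [hF, integral_add hint1 (hint2.const_mul _), integral_const_mul,
      integral_indicator_const (1:ℝ) measurableSet_uIcc,
      integral_indicator measurableSet_Ici, integral_Ici_eq_integral_Ioi,
      aux_integral_exp l hl]
    rw [measureReal_def, Real.volume_interval]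
    simp [ENNReal.toReal_ofReal (abs_nonneg h)]
  rw [hval] at hmono
  refine hmono.trans ?_
  have ht0 : (0:ℝ) ≤ l * |h| := by positivity
  have htl : l * |h| ≤ l := by nlinarith [abs_nonneg h]
  have hid : Real.exp (-(l * |h|)) * Real.exp (l * |h|) = 1 := by
    rw [← Real.exp_add]; simp
  have hkey : Real.exp (l * |h|) - 1 ≤ (l * |h|) * Real.exp (l * |h|) := by
    nlinarith [Real.add_one_le_exp (-(l * |h|)), Real.exp_pos (l * |h|)]
  have hle : Real.exp (l * |h|) ≤ Real.exp l := Real.exp_le_exp.2 htl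
  have h2 : (Real.exp (l * |h|) - 1) * (1 / l) ≤ |h| * Real.exp l := by
    rw [mul_one_div, div_le_iff₀ hl]
    calc Real.exp (l * |h|) - 1 ≤ (l * |h|) * Real.exp l := by
          nlinarith [Real.exp_pos (l * |h|)]
      _ = |h| * Real.exp l * l := by ring
  nlinarith [abs_nonneg h]
end

section
/- Let 0 < α ≤ 2 and let g ∈ L^α(ℝ) be measurable. Suppose there exist c₀⁺, c₀⁻, γ, a, c, η ∈ ℝ with c > 0, η > 0, γ ≠ 0 and 0 < γ + 1/α < a ≤ 1 such that g(r)/r^γ → c₀⁺ and g(−r)/r^γ → c₀⁻ as r → 0⁺, and |g(u+h) − g(u)| ≤ c|h|^a |u|^{γ−a} for all u ∈ ℝ \ {0} and all |h| < η. Then for every t ∈ ℝ, lim_{r → 0⁺} ∫_ℝ |r^{−γ}(g(r(t+z)) − g(rz)) − (c₀⁺((t+z)₊^γ − z₊^γ) + c₀⁻((t+z)₋^γ − z₋^γ))|^α dz = 0. -/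
open MeasureTheory Filter Topology Set

/-- `x₊^d`: equals `x ^ d` if `x > 0` and `0` otherwise. -/
noncomputable def posPow (x d : ℝ) : ℝ := if 0 < x then x ^ d else 0

/-- `x₋^d`: equals `(-x) ^ d` if `x < 0` and `0` otherwise. -/
noncomputable def negPow (x d : ℝ) : ℝ := if x < 0 then (-x) ^ d else 0

lemma my_rpow_add_le {x y p : ℝ} (hx : 0 ≤ x) (hy : 0 ≤ y) (hp : 0 ≤ p) :
    (x + y) ^ p ≤ 2 ^ p * (x ^ p + y ^ p) := by
  have hmax : x + y ≤ 2 * max x y := by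
    rcases le_total x y with h | h
    · simp [max_eq_right h]; linarith
    · simp [max_eq_left h]; linarith
  calc (x + y) ^ p ≤ (2 * max x y) ^ p :=
        Real.rpow_le_rpow (by positivity) hmax hp
    _ = 2 ^ p * (max x y) ^ p := Real.mul_rpow (by norm_num) (le_max_of_le_left hx)
    _ ≤ 2 ^ p * (x ^ p + y ^ p) := by
        gcongr
        rcases le_total x y with h | h
        · rw [max_eq_right h]
          exact le_add_of_nonneg_left (Real.rpow_nonneg hx p)
        · rw [max_eq_left h]
          exact le_add_of_nonneg_right (Real.rpow_nonneg hy p)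

lemma my_intervalIntegrable_abs_rpow {p : ℝ} (hp : -1 < p) (a b : ℝ) :
    IntervalIntegrable (fun x : ℝ => |x| ^ p) volume a b := by
  suffices h : ∀ c : ℝ, IntervalIntegrable (fun x : ℝ => |x| ^ p) volume 0 c from
    ((h a).symm.trans (h b))
  have key : ∀ c : ℝ, 0 ≤ c → IntervalIntegrable (fun x : ℝ => |x| ^ p) volume 0 c := by
    intro c hc
    have h1 : IntervalIntegrable (fun x : ℝ => x ^ p) volume 0 c :=
      intervalIntegral.intervalIntegrable_rpow' hp
    rw [intervalIntegrable_iff, uIoc_of_le hc] at h1 ⊢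
    exact h1.congr_fun (fun x hx => by rw [abs_of_pos hx.1]) measurableSet_Ioc
  intro c
  rcases le_total 0 c with h | h
  · exact key c h
  · have := (key (-c) (by linarith)).comp_mul_left (c := -1)
    simp only [neg_mul, one_mul, abs_neg] at this
    have h2 : (0:ℝ) / (-1) = 0 := by norm_num
    have h3 : (-c) / (-1) = c := by norm_num
    rw [h2, h3] at this
    exact this

lemma my_integrableOn_abs_shift {p : ℝ} (hp : -1 < p) (t a b : ℝ) :
    IntegrableOn (fun z : ℝ => |t + z| ^ p) (Icc a b) := by
  rcases le_or_gt a b with h | h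
  · have h2 := (my_intervalIntegrable_abs_rpow hp (t + a) (t + b)).comp_add_left t
    simp only [add_sub_cancel_left] at h2
    exact (intervalIntegrable_iff_integrableOn_Icc_of_le h).1 h2
  · rw [Icc_eq_empty (not_le.2 h)]
    exact integrableOn_empty

lemma my_integrableOn_Ioi_abs_rpow {q : ℝ} (hq : q < -1) {b : ℝ} (hb : 0 < b) :
    IntegrableOn (fun z : ℝ => |z| ^ q) (Ioi b) :=
  (integrableOn_Ioi_rpow_of_lt hq hb).congr_fun
    (fun x hx => by rw [abs_of_pos (hb.trans hx)]) measurableSet_Ioi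

lemma my_integrableOn_Iio_abs_rpow {q : ℝ} (hq : q < -1) {b : ℝ} (hb : 0 < b) :
    IntegrableOn (fun z : ℝ => |z| ^ q) (Iio (-b)) := by
  rw [← (Measure.measurePreserving_neg (volume : Measure ℝ)).integrableOn_comp_preimage
      (Homeomorph.neg ℝ).measurableEmbedding]
  simp only [Function.comp_def, neg_preimage, neg_Iio, abs_neg, neg_neg]
  exact my_integrableOn_Ioi_abs_rpow hq hb

lemma my_tendsto_scale {g : ℝ → ℝ} {γ c₀p c₀m : ℝ}
    (hp : Tendsto (fun r : ℝ => g r / r ^ γ) (𝓝[>] 0) (𝓝 c₀p))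
    (hm : Tendsto (fun r : ℝ => g (-r) / r ^ γ) (𝓝[>] 0) (𝓝 c₀m))
    {x : ℝ} (hx : x ≠ 0) :
    Tendsto (fun r : ℝ => g (r * x) / r ^ γ) (𝓝[>] 0)
      (𝓝 (c₀p * posPow x γ + c₀m * negPow x γ)) := by
  rcases hx.lt_or_gt with hneg | hpos
  · have hT : Tendsto (fun r : ℝ => r * (-x)) (𝓝[>] 0) (𝓝[>] 0) := by
      apply tendsto_nhdsWithin_of_tendsto_nhds_of_eventually_within
      · have h0 : Tendsto (fun r : ℝ => r * (-x)) (𝓝 (0:ℝ)) (𝓝 ((0:ℝ) * (-x))) :=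
          tendsto_id.mul_const _
        rw [zero_mul] at h0
        exact h0.mono_left nhdsWithin_le_nhds
      · filter_upwards [self_mem_nhdsWithin] with r hr
        exact mul_pos (mem_Ioi.mp hr) (by linarith)
    have h1 := (hm.comp hT).mul_const ((-x) ^ γ)
    have heq : (fun r : ℝ => g (-(r * (-x))) / (r * (-x)) ^ γ * (-x) ^ γ)
        =ᶠ[𝓝[>] (0:ℝ)] (fun r : ℝ => g (r * x) / r ^ γ) := by
      filter_upwards [self_mem_nhdsWithin] with r hr
      have hx' : (0:ℝ) < -x := by linarith
      have hrx : (-(r * x)) ^ γ = r ^ γ * (-x) ^ γ := by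
        rw [show -(r * x) = r * (-x) by ring]
        exact Real.mul_rpow hr.le hx'.le
      have hxγ : (-x) ^ γ ≠ 0 := ne_of_gt (Real.rpow_pos_of_pos hx' γ)
      have hrγ : (r:ℝ) ^ γ ≠ 0 := ne_of_gt (Real.rpow_pos_of_pos hr γ)
      simp only [mul_neg, neg_neg]
      rw [hrx]
      field_simp
    have h2 := h1.congr' heq
    convert h2 using 2
    simp only [posPow, negPow, if_neg (asymm hneg), if_pos hneg]
    ring
  · have hT : Tendsto (fun r : ℝ => r * x) (𝓝[>] 0) (𝓝[>] 0) := by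
      apply tendsto_nhdsWithin_of_tendsto_nhds_of_eventually_within
      · have h0 : Tendsto (fun r : ℝ => r * x) (𝓝 (0:ℝ)) (𝓝 ((0:ℝ) * x)) :=
          tendsto_id.mul_const _
        rw [zero_mul] at h0
        exact h0.mono_left nhdsWithin_le_nhds
      · filter_upwards [self_mem_nhdsWithin] with r hr
        exact mul_pos hr hpos
    have h1 := (hp.comp hT).mul_const (x ^ γ)
    have heq : (fun r : ℝ => g (r * x) / (r * x) ^ γ * x ^ γ)
        =ᶠ[𝓝[>] (0:ℝ)] (fun r : ℝ => g (r * x) / r ^ γ) := by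
      filter_upwards [self_mem_nhdsWithin] with r hr
      have hrx : (r * x) ^ γ = r ^ γ * x ^ γ := Real.mul_rpow hr.le hpos.le
      have hxγ : x ^ γ ≠ 0 := ne_of_gt (Real.rpow_pos_of_pos hpos γ)
      have hrγ : (r:ℝ) ^ γ ≠ 0 := ne_of_gt (Real.rpow_pos_of_pos hr γ)
      rw [hrx]
      field_simp
    have h2 := h1.congr' heq
    convert h2 using 2
    simp only [posPow, negPow, if_pos hpos, if_neg (asymm hpos)]
    ring

/-- L^α convergence of rescaled kernel increments to the linear
fractional stable motion kernel (Proposition 3.1(a), analytic core). -/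
theorem stmt_3 (α : ℝ) (hα0 : 0 < α) (hα2 : α ≤ 2) (g : ℝ → ℝ) (hmg : Measurable g)
    (hgLα : Integrable (fun x : ℝ => |g x| ^ α))
    (c₀p c₀m γ a c η : ℝ) (hc : 0 < c) (hη : 0 < η) (hγ : γ ≠ 0)
    (h1 : 0 < γ + 1 / α) (h2 : γ + 1 / α < a) (h3 : a ≤ 1)
    (hp : Tendsto (fun r : ℝ => g r / r ^ γ) (𝓝[>] 0) (𝓝 c₀p))
    (hm : Tendsto (fun r : ℝ => g (-r) / r ^ γ) (𝓝[>] 0) (𝓝 c₀m))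
    (hinc : ∀ u : ℝ, u ≠ 0 → ∀ h : ℝ, |h| < η →
      |g (u + h) - g u| ≤ c * |h| ^ a * |u| ^ (γ - a)) :
    ∀ t : ℝ,
      Tendsto (fun r : ℝ => ∫ z : ℝ,
          |(g (r * (t + z)) - g (r * z)) / r ^ γ -
            (c₀p * (posPow (t + z) γ - posPow z γ) +
             c₀m * (negPow (t + z) γ - negPow z γ))| ^ α)
        (𝓝[>] 0) (𝓝 0) := by
  intro t
  set F : ℝ → ℝ := fun z => c₀p * (posPow (t + z) γ - posPow z γ) +
      c₀m * (negPow (t + z) γ - negPow z γ) with hFdef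
  set R : ℝ := |t| + 1 with hRdef
  have hRpos : (0:ℝ) < R := by positivity
  have htR : |t| < R := by rw [hRdef]; linarith
  have hα0' : α ≠ 0 := ne_of_gt hα0
  have ha0 : 0 < a := lt_trans h1 h2
  have hαinv : α * (1 / α) = 1 := by field_simp
  have hαγ : -1 < γ * α := by nlinarith [mul_pos hα0 h1]
  have hq : (γ - a) * α < -1 := by nlinarith [mul_lt_mul_of_pos_left h2 hα0]
  -- bounds near zero from the tendsto hypotheses
  have hboundp : ∃ δ > 0, ∀ s : ℝ, 0 < s → s < δ → |g s| ≤ (|c₀p| + 1) * s ^ γ := by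
    have hev : ∀ᶠ s in 𝓝[>] (0:ℝ), g s / s ^ γ ∈ Metric.ball c₀p 1 :=
      hp.eventually (Metric.ball_mem_nhds c₀p one_pos)
    rw [eventually_nhdsWithin_iff] at hev
    obtain ⟨ε, hε, hball⟩ := Metric.eventually_nhds_iff.1 hev
    refine ⟨ε, hε, fun s hs hsε => ?_⟩
    have hmem : g s / s ^ γ ∈ Metric.ball c₀p 1 := by
      apply hball
      · rw [Real.dist_eq, sub_zero, abs_of_pos hs]; exact hsε
      · exact hs
    rw [Metric.mem_ball, Real.dist_eq] at hmem
    have hsγ : 0 < s ^ γ := Real.rpow_pos_of_pos hs γ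
    have hgs : g s = (g s / s ^ γ) * s ^ γ := by field_simp
    rw [hgs, abs_mul, abs_of_pos hsγ]
    have : |g s / s ^ γ| ≤ |c₀p| + 1 := by
      calc |g s / s ^ γ| = |(g s / s ^ γ - c₀p) + c₀p| := by ring_nf
        _ ≤ |g s / s ^ γ - c₀p| + |c₀p| := abs_add_le _ _
        _ ≤ |c₀p| + 1 := by linarith
    exact mul_le_mul_of_nonneg_right this hsγ.le
  have hboundm : ∃ δ > 0, ∀ s : ℝ, 0 < s → s < δ → |g (-s)| ≤ (|c₀m| + 1) * s ^ γ := by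
    have hev : ∀ᶠ s in 𝓝[>] (0:ℝ), g (-s) / s ^ γ ∈ Metric.ball c₀m 1 :=
      hm.eventually (Metric.ball_mem_nhds c₀m one_pos)
    rw [eventually_nhdsWithin_iff] at hev
    obtain ⟨ε, hε, hball⟩ := Metric.eventually_nhds_iff.1 hev
    refine ⟨ε, hε, fun s hs hsε => ?_⟩
    have hmem : g (-s) / s ^ γ ∈ Metric.ball c₀m 1 := by
      apply hball
      · rw [Real.dist_eq, sub_zero, abs_of_pos hs]; exact hsε
      · exact hs
    rw [Metric.mem_ball, Real.dist_eq] at hmem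
    have hsγ : 0 < s ^ γ := Real.rpow_pos_of_pos hs γ
    have hgs : g (-s) = (g (-s) / s ^ γ) * s ^ γ := by field_simp
    rw [hgs, abs_mul, abs_of_pos hsγ]
    have : |g (-s) / s ^ γ| ≤ |c₀m| + 1 := by
      calc |g (-s) / s ^ γ| = |(g (-s) / s ^ γ - c₀m) + c₀m| := by ring_nf
        _ ≤ |g (-s) / s ^ γ - c₀m| + |c₀m| := abs_add_le _ _
        _ ≤ |c₀m| + 1 := by linarith
    exact mul_le_mul_of_nonneg_right this hsγ.le
  obtain ⟨δp, hδp, hbp⟩ := hboundp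
  obtain ⟨δm, hδm, hbm⟩ := hboundm
  set δ : ℝ := min δp δm with hδdef
  have hδ : 0 < δ := lt_min hδp hδm
  set K : ℝ := |c₀p| + |c₀m| + 2 with hKdef
  have hK0 : (0:ℝ) ≤ K := by positivity
  have hgb : ∀ s : ℝ, s ≠ 0 → |s| < δ → |g s| ≤ K * |s| ^ γ := by
    intro s hs hsδ
    rcases hs.lt_or_gt with hneg | hpos
    · have habs : |s| = -s := abs_of_neg hneg
      have h' := hbm (-s) (by linarith) (by rw [habs] at hsδ; exact lt_of_lt_of_le hsδ (min_le_right _ _))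
      rw [neg_neg] at h'
      calc |g s| ≤ (|c₀m| + 1) * (-s) ^ γ := h'
        _ ≤ K * |s| ^ γ := by
            rw [habs]
            apply mul_le_mul_of_nonneg_right _ (Real.rpow_nonneg (by linarith) γ)
            rw [hKdef]; nlinarith [abs_nonneg c₀p, abs_nonneg c₀m]
    · have habs : |s| = s := abs_of_pos hpos
      have h' := hbp s hpos (by rw [habs] at hsδ; exact lt_of_lt_of_le hsδ (min_le_left _ _))
      calc |g s| ≤ (|c₀p| + 1) * s ^ γ := h'
        _ ≤ K * |s| ^ γ := by
            rw [habs]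
            apply mul_le_mul_of_nonneg_right _ (Real.rpow_nonneg hpos.le γ)
            rw [hKdef]; nlinarith [abs_nonneg c₀p, abs_nonneg c₀m]
  set bd : ℝ → ℝ := fun z => if |z| ≤ 2 * R then K * (|t + z| ^ γ + |z| ^ γ)
      else c * R ^ a * |z| ^ (γ - a) with hbddef
  have hbd0 : ∀ z, 0 ≤ bd z := by
    intro z; rw [hbddef]; dsimp only; split
    · positivity
    · positivity
  have hev : ∀ᶠ r in 𝓝[>] (0:ℝ), ∀ z : ℝ, z ≠ 0 → t + z ≠ 0 →
      |(g (r * (t + z)) - g (r * z)) / r ^ γ| ≤ bd z := by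
    have hsmall : ∀ᶠ r in 𝓝[>] (0:ℝ), r * (3 * R) < δ ∧ r * R < η := by
      have t1 : Tendsto (fun r : ℝ => r * (3 * R)) (𝓝 0) (𝓝 ((0:ℝ) * (3 * R))) :=
        tendsto_id.mul_const _
      have t2 : Tendsto (fun r : ℝ => r * R) (𝓝 0) (𝓝 ((0:ℝ) * R)) := tendsto_id.mul_const _
      rw [zero_mul] at t1 t2
      have e1 : ∀ᶠ r in 𝓝 (0:ℝ), r * (3 * R) < δ := t1.eventually_lt_const hδ
      have e2 : ∀ᶠ r in 𝓝 (0:ℝ), r * R < η := t2.eventually_lt_const hη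
      exact ((e1.and e2).filter_mono nhdsWithin_le_nhds)
    filter_upwards [hsmall, self_mem_nhdsWithin] with r hsm hr
    obtain ⟨h3R, hrR⟩ := hsm
    rw [mem_Ioi] at hr
    intro z hz hz'
    have hrγ : 0 < r ^ γ := Real.rpow_pos_of_pos hr γ
    rw [abs_div, abs_of_pos hrγ, div_le_iff₀ hrγ]
    by_cases hcase : |z| ≤ 2 * R
    · have htz3 : |t + z| ≤ 3 * R := by
        calc |t + z| ≤ |t| + |z| := abs_add_le t z
          _ ≤ 3 * R := by linarith
      have e1 : |g (r * (t + z))| ≤ K * |r * (t + z)| ^ γ := by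
        apply hgb _ (mul_ne_zero (ne_of_gt hr) hz')
        rw [abs_mul, abs_of_pos hr]
        calc r * |t + z| ≤ r * (3 * R) := by gcongr
          _ < δ := h3R
      have e2 : |g (r * z)| ≤ K * |r * z| ^ γ := by
        apply hgb _ (mul_ne_zero (ne_of_gt hr) hz)
        rw [abs_mul, abs_of_pos hr]
        calc r * |z| ≤ r * (3 * R) :=
              mul_le_mul_of_nonneg_left (by linarith) hr.le
          _ < δ := h3R
      have r1 : |r * (t + z)| ^ γ = r ^ γ * |t + z| ^ γ := by
        rw [abs_mul, abs_of_pos hr]; exact Real.mul_rpow hr.le (abs_nonneg _)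
      have r2 : |r * z| ^ γ = r ^ γ * |z| ^ γ := by
        rw [abs_mul, abs_of_pos hr]; exact Real.mul_rpow hr.le (abs_nonneg _)
      rw [hbddef]; dsimp only; rw [if_pos hcase]
      calc |g (r * (t + z)) - g (r * z)| ≤ |g (r * (t + z))| + |g (r * z)| := abs_sub _ _
        _ ≤ K * |r * (t + z)| ^ γ + K * |r * z| ^ γ := add_le_add e1 e2
        _ = K * (|t + z| ^ γ + |z| ^ γ) * r ^ γ := by rw [r1, r2]; ring
    · have hu : r * z ≠ 0 := mul_ne_zero (ne_of_gt hr) hz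
      have hh : |r * t| < η := by
        rw [abs_mul, abs_of_pos hr]
        calc r * |t| ≤ r * R := mul_le_mul_of_nonneg_left htR.le hr.le
          _ < η := hrR
      have hbig := hinc (r * z) hu (r * t) hh
      rw [show r * z + r * t = r * (t + z) by ring] at hbig
      have r3 : |r * t| ^ a = r ^ a * |t| ^ a := by
        rw [abs_mul, abs_of_pos hr]; exact Real.mul_rpow hr.le (abs_nonneg _)
      have r4 : |r * z| ^ (γ - a) = r ^ (γ - a) * |z| ^ (γ - a) := by
        rw [abs_mul, abs_of_pos hr]; exact Real.mul_rpow hr.le (abs_nonneg _)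
      have r5 : r ^ a * r ^ (γ - a) = r ^ γ := by
        rw [← Real.rpow_add hr]; ring_nf
      have hta : |t| ^ a ≤ R ^ a := Real.rpow_le_rpow (abs_nonneg t) htR.le ha0.le
      rw [hbddef]; dsimp only; rw [if_neg hcase]
      have h6 : (0:ℝ) ≤ |z| ^ (γ - a) := Real.rpow_nonneg (abs_nonneg z) _
      calc |g (r * (t + z)) - g (r * z)| ≤ c * |r * t| ^ a * |r * z| ^ (γ - a) := hbig
        _ = c * |t| ^ a * |z| ^ (γ - a) * r ^ γ := by rw [r3, r4, ← r5]; ring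
        _ ≤ c * R ^ a * |z| ^ (γ - a) * r ^ γ :=
            mul_le_mul_of_nonneg_right
              (mul_le_mul_of_nonneg_right (mul_le_mul_of_nonneg_left hta hc.le) h6) hrγ.le
  have mrpowα : Measurable fun x : ℝ => x ^ α := by fun_prop
  have hlim : ∀ z : ℝ, z ≠ 0 → t + z ≠ 0 →
      Tendsto (fun r : ℝ => (g (r * (t + z)) - g (r * z)) / r ^ γ) (𝓝[>] 0) (𝓝 (F z)) := by
    intro z hz hz'
    have hA := my_tendsto_scale hp hm hz'
    have hB := my_tendsto_scale hp hm hz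
    have h12 := hA.sub hB
    have heq : (fun r : ℝ => g (r * (t + z)) / r ^ γ - g (r * z) / r ^ γ)
        = fun r : ℝ => (g (r * (t + z)) - g (r * z)) / r ^ γ := by
      funext r; rw [div_sub_div_same]
    rw [heq] at h12
    have hval : c₀p * posPow (t + z) γ + c₀m * negPow (t + z) γ -
        (c₀p * posPow z γ + c₀m * negPow z γ) = F z := by
      rw [hFdef]; ring
    rwa [hval] at h12
  have hFle : ∀ z : ℝ, z ≠ 0 → t + z ≠ 0 → |F z| ≤ bd z := by
    intro z hz hz'
    exact le_of_tendsto (hlim z hz hz').abs (hev.mono fun r hr => hr z hz hz')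
  have hzae : ∀ᵐ z : ℝ, z ≠ 0 ∧ t + z ≠ 0 := by
    have hnull : volume ({0, -t} : Set ℝ) = 0 := (Set.toFinite _).measure_zero volume
    have hae := measure_eq_zero_iff_ae_notMem.mp hnull
    filter_upwards [hae] with z hzz
    simp only [Set.mem_insert_iff, Set.mem_singleton_iff, not_or] at hzz
    exact ⟨hzz.1, fun h => hzz.2 (by linarith)⟩
  have mposP : Measurable fun x : ℝ => posPow x γ := by
    unfold posPow
    exact Measurable.ite (measurableSet_lt measurable_const measurable_id)
      (by fun_prop) measurable_const
  have mnegP : Measurable fun x : ℝ => negPow x γ := by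
    unfold negPow
    exact Measurable.ite (measurableSet_lt measurable_id measurable_const)
      (by fun_prop) measurable_const
  have mshift : Measurable fun z : ℝ => t + z := measurable_const.add measurable_id
  have mF : Measurable F := by
    rw [hFdef]
    exact (((mposP.comp mshift).sub mposP).const_mul c₀p).add
      (((mnegP.comp mshift).sub mnegP).const_mul c₀m)
  have hmeas : ∀ᶠ r in 𝓝[>] (0:ℝ), AEStronglyMeasurable
      (fun z : ℝ => |(g (r * (t + z)) - g (r * z)) / r ^ γ - F z| ^ α) volume := by
    apply Filter.Eventually.of_forall
    intro r
    have m1 : Measurable fun z : ℝ => (g (r * (t + z)) - g (r * z)) / r ^ γ :=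
      ((hmg.comp (by fun_prop)).sub (hmg.comp (by fun_prop))).div_const _
    exact (mrpowα.comp (m1.sub mF).abs).aestronglyMeasurable
  have hbound : ∀ᶠ r in 𝓝[>] (0:ℝ), ∀ᵐ z : ℝ,
      ‖|(g (r * (t + z)) - g (r * z)) / r ^ γ - F z| ^ α‖ ≤ (2 * bd z) ^ α := by
    filter_upwards [hev] with r hr
    filter_upwards [hzae] with z hz
    obtain ⟨hz1, hz2⟩ := hz
    have e1 := hr z hz1 hz2
    have e2 := hFle z hz1 hz2
    rw [Real.norm_eq_abs, abs_of_nonneg (Real.rpow_nonneg (abs_nonneg _) _)]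
    apply Real.rpow_le_rpow (abs_nonneg _) _ hα0.le
    calc |(g (r * (t + z)) - g (r * z)) / r ^ γ - F z|
        ≤ |(g (r * (t + z)) - g (r * z)) / r ^ γ| + |F z| := abs_sub _ _
      _ ≤ 2 * bd z := by linarith
  have hcont : Continuous fun y : ℝ => |y| ^ α :=
    continuous_abs.rpow_const (fun y => Or.inr hα0.le)
  have hlim' : ∀ᵐ z : ℝ, Tendsto (fun r : ℝ =>
      |(g (r * (t + z)) - g (r * z)) / r ^ γ - F z| ^ α) (𝓝[>] 0) (𝓝 0) := by
    filter_upwards [hzae] with z hz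
    obtain ⟨hz1, hz2⟩ := hz
    have h := (hlim z hz1 hz2).sub (tendsto_const_nhds (x := F z))
    rw [sub_self] at h
    have h2 := (hcont.tendsto 0).comp h
    simp only [Function.comp_def, abs_zero, Real.zero_rpow hα0'] at h2
    exact h2
  set C₁ : ℝ := (2 * K) ^ α * 2 ^ α with hC₁
  set C₂ : ℝ := (2 * (c * R ^ a)) ^ α with hC₂
  set M : ℝ → ℝ := fun z => if |z| ≤ 2 * R then C₁ * (|t + z| ^ (γ * α) + |z| ^ (γ * α))
      else C₂ * |z| ^ ((γ - a) * α) with hMdef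
  have hSm : MeasurableSet {z : ℝ | |z| ≤ 2 * R} :=
    measurableSet_le (by fun_prop) measurable_const
  have hMint : Integrable M := by
    have hf₁ : IntegrableOn (fun z : ℝ => C₁ * (|t + z| ^ (γ * α) + |z| ^ (γ * α)))
        {z : ℝ | |z| ≤ 2 * R} := by
      have hset : {z : ℝ | |z| ≤ 2 * R} = Icc (-(2 * R)) (2 * R) := by
        ext z; simp [abs_le]
      rw [hset]
      apply Integrable.const_mul
      apply Integrable.add (my_integrableOn_abs_shift hαγ t _ _)
      exact (my_integrableOn_abs_shift hαγ 0 (-(2 * R)) (2 * R)).congr_fun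
        (fun x _ => by simp only [zero_add]) measurableSet_Icc
    have hf₂ : IntegrableOn (fun z : ℝ => C₂ * |z| ^ ((γ - a) * α))
        {z : ℝ | |z| ≤ 2 * R}ᶜ := by
      have i1 : IntegrableOn (fun z : ℝ => C₂ * |z| ^ ((γ - a) * α)) (Iio (-(2 * R))) :=
        (my_integrableOn_Iio_abs_rpow hq (by positivity)).const_mul C₂
      have i2 : IntegrableOn (fun z : ℝ => C₂ * |z| ^ ((γ - a) * α)) (Ioi (2 * R)) :=
        (my_integrableOn_Ioi_abs_rpow hq (by positivity)).const_mul C₂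
      have hun := i1.union i2
      apply hun.mono_set
      intro z hzc
      simp only [mem_compl_iff, mem_setOf_eq, not_le] at hzc
      rcases lt_abs.mp hzc with h | h
      · exact Or.inr h
      · exact Or.inl (by simp only [mem_Iio]; linarith)
    have hMsplit : M = {z : ℝ | |z| ≤ 2 * R}.indicator
          (fun z : ℝ => C₁ * (|t + z| ^ (γ * α) + |z| ^ (γ * α))) +
        {z : ℝ | |z| ≤ 2 * R}ᶜ.indicator (fun z : ℝ => C₂ * |z| ^ ((γ - a) * α)) := by
      funext z
      by_cases hcz : |z| ≤ 2 * R <;>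
        simp [hMdef, Set.indicator_apply, hcz]
    rw [hMsplit]
    exact ((integrable_indicator_iff hSm).2 hf₁).add
      ((integrable_indicator_iff hSm.compl).2 hf₂)
  have hMb : ∀ z : ℝ, ‖(2 * bd z) ^ α‖ ≤ M z := by
    intro z
    have hbdz := hbd0 z
    rw [Real.norm_eq_abs, abs_of_nonneg (Real.rpow_nonneg (by linarith) _)]
    rw [hbddef, hMdef]; dsimp only
    by_cases hcz : |z| ≤ 2 * R
    · rw [if_pos hcz, if_pos hcz]
      have hX : (0:ℝ) ≤ |t + z| ^ γ := Real.rpow_nonneg (abs_nonneg _) _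
      have hY : (0:ℝ) ≤ |z| ^ γ := Real.rpow_nonneg (abs_nonneg _) _
      calc (2 * (K * (|t + z| ^ γ + |z| ^ γ))) ^ α
          = (2 * K) ^ α * (|t + z| ^ γ + |z| ^ γ) ^ α := by
            rw [show 2 * (K * (|t + z| ^ γ + |z| ^ γ))
                = (2 * K) * (|t + z| ^ γ + |z| ^ γ) by ring,
              Real.mul_rpow (by positivity) (by positivity)]
        _ ≤ (2 * K) ^ α * (2 ^ α * ((|t + z| ^ γ) ^ α + (|z| ^ γ) ^ α)) :=
            mul_le_mul_of_nonneg_left (my_rpow_add_le hX hY hα0.le)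
              (Real.rpow_nonneg (by positivity) α)
        _ = C₁ * (|t + z| ^ (γ * α) + |z| ^ (γ * α)) := by
            rw [hC₁, Real.rpow_mul (abs_nonneg (t + z)), Real.rpow_mul (abs_nonneg z)]
            ring
    · rw [if_neg hcz, if_neg hcz]
      have h6 : (0:ℝ) ≤ |z| ^ (γ - a) := Real.rpow_nonneg (abs_nonneg z) _
      calc (2 * (c * R ^ a * |z| ^ (γ - a))) ^ α
          = (2 * (c * R ^ a)) ^ α * (|z| ^ (γ - a)) ^ α := by
            rw [show 2 * (c * R ^ a * |z| ^ (γ - a))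
                = (2 * (c * R ^ a)) * |z| ^ (γ - a) by ring,
              Real.mul_rpow (by positivity) h6]
        _ = C₂ * |z| ^ ((γ - a) * α) := by
            rw [hC₂, ← Real.rpow_mul (abs_nonneg z)]
        _ ≤ C₂ * |z| ^ ((γ - a) * α) := le_rfl
  have hbdmeas : Measurable bd := by
    rw [hbddef]
    exact Measurable.ite hSm (by fun_prop) (by fun_prop)
  have hint : Integrable fun z : ℝ => (2 * bd z) ^ α := by
    apply Integrable.mono' hMint
    · exact (mrpowα.comp (hbdmeas.const_mul 2)).aestronglyMeasurable
    · exact Filter.Eventually.of_forall hMb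
  have hDCT := MeasureTheory.tendsto_integral_filter_of_dominated_convergence
      (μ := volume) (l := 𝓝[>] (0:ℝ))
      (F := fun (r : ℝ) (z : ℝ) => |(g (r * (t + z)) - g (r * z)) / r ^ γ - F z| ^ α)
      (f := fun _ : ℝ => (0:ℝ)) (bound := fun z : ℝ => (2 * bd z) ^ α)
      hmeas hbound hint hlim'
  rw [MeasureTheory.integral_zero] at hDCT
  exact hDCT
end

section
/- Let 0 < α ≤ 2 and let g ∈ L^α(ℝ) be measurable. Suppose there exist c₀⁺, c₀⁻, a, c, η ∈ ℝ with c > 0, η > 0 and 1/α < a ≤ 1 such that g(r) → c₀⁺ and g(−r) → c₀⁻ as r → 0⁺, and |g(u+h) − g(u)| ≤ c|h|^a |u|^{−a} for all u ∈ ℝ \ {0} and all |h| < η. For t ≥ 0 set h_t(z) = (c₀⁺ − c₀⁻)1_{[0,t]}(−z) and for t < 0 set h_t(z) = −(c₀⁺ − c₀⁻)1_{[t,0]}(−z). Then for every t ∈ ℝ, lim_{r → 0⁺} ∫_ℝ |g(r(t+z)) − g(rz) − h_t(z)|^α dz = 0. -/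
open MeasureTheory Filter Topology Set

set_option maxHeartbeats 2000000 in
/-- L^α convergence of kernel increments in the case γ = 0
(Proposition 3.1(b), analytic core). -/
theorem stmt_4 (α : ℝ) (hα0 : 0 < α) (hα2 : α ≤ 2) (g : ℝ → ℝ) (hmg : Measurable g)
    (hgLα : Integrable (fun x : ℝ => |g x| ^ α))
    (c₀p c₀m a c η : ℝ) (hc : 0 < c) (hη : 0 < η)
    (h2 : 1 / α < a) (h3 : a ≤ 1)
    (hp : Tendsto g (𝓝[>] 0) (𝓝 c₀p))
    (hm : Tendsto (fun r : ℝ => g (-r)) (𝓝[>] 0) (𝓝 c₀m))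
    (hinc : ∀ u : ℝ, u ≠ 0 → ∀ h : ℝ, |h| < η →
      |g (u + h) - g u| ≤ c * |h| ^ a * |u| ^ (-a))
    (h : ℝ → ℝ → ℝ)
    (hh : ∀ t z : ℝ, h t z =
      if 0 ≤ t then (c₀p - c₀m) * Set.indicator (Set.Icc 0 t) (fun _ => (1:ℝ)) (-z)
      else -(c₀p - c₀m) * Set.indicator (Set.Icc t 0) (fun _ => (1:ℝ)) (-z)) :
    ∀ t : ℝ,
      Tendsto (fun r : ℝ => ∫ z : ℝ, |g (r * (t + z)) - g (r * z) - h t z| ^ α)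
        (𝓝[>] 0) (𝓝 0) := by
  intro t
  have ha0 : 0 < a := lt_trans (by positivity) h2
  have haα : 1 < a * α := by
    rw [div_lt_iff₀ hα0] at h2; linarith
  -- boundedness of g near 0
  obtain ⟨δ₁, hδ₁pos, hδ₁⟩ : ∃ δ₁ > (0:ℝ), ∀ u ∈ Ioo (0:ℝ) δ₁, dist (g u) c₀p < 1 :=
    (nhdsGT_basis (0:ℝ)).eventually_iff.1 (Metric.tendsto_nhds.1 hp 1 one_pos)
  obtain ⟨δ₂, hδ₂pos, hδ₂⟩ : ∃ δ₂ > (0:ℝ), ∀ u ∈ Ioo (0:ℝ) δ₂, dist (g (-u)) c₀m < 1 :=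
    (nhdsGT_basis (0:ℝ)).eventually_iff.1 (Metric.tendsto_nhds.1 hm 1 one_pos)
  set δ : ℝ := min δ₁ δ₂ with hδdef
  have hδpos : 0 < δ := lt_min hδ₁pos hδ₂pos
  set M : ℝ := max (|c₀p| + 1) (|c₀m| + 1) with hMdef
  have hM : ∀ u : ℝ, u ≠ 0 → |u| < δ → |g u| ≤ M := by
    intro u hu hud
    rcases hu.lt_or_gt with hneg | hpos
    · have h1 : dist (g (-(-u))) c₀m < 1 := by
        refine hδ₂ (-u) ⟨by linarith, ?_⟩
        have : |u| = -u := abs_of_neg hneg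
        calc -u = |u| := this.symm
        _ < δ := hud
        _ ≤ δ₂ := min_le_right _ _
      rw [neg_neg] at h1
      have : |g u| ≤ |c₀m| + 1 := by
        rw [Real.dist_eq] at h1
        calc |g u| = |g u - c₀m + c₀m| := by ring_nf
        _ ≤ |g u - c₀m| + |c₀m| := abs_add_le _ _
        _ ≤ |c₀m| + 1 := by linarith
      exact this.trans (le_max_right _ _)
    · have h1 : dist (g u) c₀p < 1 := by
        refine hδ₁ u ⟨hpos, ?_⟩
        have : |u| = u := abs_of_pos hpos
        calc u = |u| := this.symm
        _ < δ := hud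
        _ ≤ δ₁ := min_le_left _ _
      have : |g u| ≤ |c₀p| + 1 := by
        rw [Real.dist_eq] at h1
        calc |g u| = |g u - c₀p + c₀p| := by ring_nf
        _ ≤ |g u - c₀p| + |c₀p| := abs_add_le _ _
        _ ≤ |c₀p| + 1 := by linarith
      exact this.trans (le_max_left _ _)
  have hMpos : 0 < M := lt_of_lt_of_le (by positivity) (le_max_left _ _)
  set K : ℝ := |t| + 1 with hKdef
  have hKpos : (0:ℝ) < K := by positivity
  have htK : |t| < K := by simp [hKdef]
  set C1 : ℝ := (2 * M + |c₀p - c₀m|) ^ α with hC1def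
  set C2 : ℝ := (c * |t| ^ a) ^ α with hC2def
  set bound : ℝ → ℝ := fun z => if |z| ≤ K then C1 else C2 * |z| ^ (-(a * α)) with hbounddef
  -- h is bounded and vanishes far away
  have habs_h : ∀ z : ℝ, |h t z| ≤ |c₀p - c₀m| := by
    intro z
    rw [hh, Set.indicator_apply, Set.indicator_apply]
    split_ifs <;> simp [abs_mul, abs_sub_comm, abs_nonneg]
  have hfar : ∀ z : ℝ, |t| < |z| → h t z = 0 := by
    intro z hz
    rw [hh, Set.indicator_apply, Set.indicator_apply]
    split_ifs with ht0 hmem hmem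
    · exfalso
      obtain ⟨h1, h2⟩ := hmem
      have : |z| ≤ |t| := by
        rw [abs_of_nonneg ht0] at hz
        have : |z| = -z := by
          rcases le_or_gt z 0 with hz0 | hz0
          · exact abs_of_nonpos hz0
          · exfalso; nlinarith [abs_nonneg z, abs_of_pos hz0]
        rw [this, abs_of_nonneg ht0]; exact h2
      linarith
    · ring
    · exfalso
      obtain ⟨h1, h2⟩ := hmem
      push_neg at ht0
      have habs : |z| = z := by
        rcases le_or_gt 0 z with hz0 | hz0
        · exact abs_of_nonneg hz0
        · exfalso; nlinarith [abs_of_neg hz0]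
      rw [habs] at hz
      rw [abs_of_neg ht0] at hz
      linarith
    · ring
  -- measurability of h t
  have hmh : Measurable (h t) := by
    have : h t = fun z : ℝ =>
        if 0 ≤ t then (c₀p - c₀m) * Set.indicator (Set.Icc 0 t) (fun _ => (1:ℝ)) (-z)
        else -(c₀p - c₀m) * Set.indicator (Set.Icc t 0) (fun _ => (1:ℝ)) (-z) :=
      funext (hh t)
    rw [this]
    by_cases ht0 : 0 ≤ t <;> simp only [ht0, if_true, if_false]
    · exact (measurable_const.indicator measurableSet_Icc).comp measurable_neg |>.const_mul _
    · exact (measurable_const.indicator measurableSet_Icc).comp measurable_neg |>.const_mul _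
  -- limits of g(r w)
  have hmul_pos : ∀ w : ℝ, 0 < w →
      Tendsto (fun r : ℝ => r * w) (𝓝[>] (0:ℝ)) (𝓝[>] (0:ℝ)) := by
    intro w hw
    rw [tendsto_nhdsWithin_iff]
    constructor
    · have h1 : Tendsto (fun r : ℝ => r * w) (𝓝[>] (0:ℝ)) (𝓝 (0 * w)) :=
        Tendsto.mul_const w (tendsto_id.mono_left nhdsWithin_le_nhds)
      simpa using h1
    exact eventually_mem_nhdsWithin.mono fun r hr => mul_pos hr hw
  have hgl_pos : ∀ w : ℝ, 0 < w →
      Tendsto (fun r : ℝ => g (r * w)) (𝓝[>] (0:ℝ)) (𝓝 c₀p) := by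
    intro w hw
    exact hp.comp (hmul_pos w hw)
  have hgl_neg : ∀ w : ℝ, w < 0 →
      Tendsto (fun r : ℝ => g (r * w)) (𝓝[>] (0:ℝ)) (𝓝 c₀m) := by
    intro w hw
    have := hm.comp (hmul_pos (-w) (by linarith))
    refine this.congr fun r => ?_
    simp
  have hae : ∀ᵐ z : ℝ, z ≠ 0 ∧ z ≠ -t := by
    have h1 : ∀ᵐ z : ℝ, z ≠ 0 := by simp [ae_iff, measure_singleton]
    have h2 : ∀ᵐ z : ℝ, z ≠ -t := by simp [ae_iff, measure_singleton]
    exact h1.and h2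
  suffices main : Tendsto (fun r : ℝ => ∫ z : ℝ, |g (r * (t + z)) - g (r * z) - h t z| ^ α)
      (𝓝[>] 0) (𝓝 (∫ _ : ℝ, (0:ℝ))) by simpa using main
  apply tendsto_integral_filter_of_dominated_convergence bound
  -- measurability
  · filter_upwards with r
    have hinner : Measurable fun z : ℝ => |g (r * (t + z)) - g (r * z) - h t z| :=
      (((hmg.comp (measurable_const.mul (measurable_const.add measurable_id))).sub
        (hmg.comp (measurable_const.mul measurable_id))).sub hmh).abs
    have hmeas : Measurable fun z : ℝ => |g (r * (t + z)) - g (r * z) - h t z| ^ α :=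
      (Real.continuous_rpow_const hα0.le).measurable.comp hinner
    exact hmeas.aestronglyMeasurable
  -- bound
  · set r₀ : ℝ := min (δ / (2*K)) (η / K) with hr₀def
    have hr₀1 : r₀ ≤ δ / (2*K) := min_le_left _ _
    have hr₀2 : r₀ ≤ η / K := min_le_right _ _
    have hr₀pos : 0 < r₀ := lt_min (by positivity) (by positivity)
    refine (nhdsGT_basis (0:ℝ)).eventually_iff.2 ⟨r₀, hr₀pos, fun r hr => ?_⟩
    obtain ⟨hrpos, hrlt⟩ := hr
    filter_upwards [hae] with z hz
    obtain ⟨hz0, hzt⟩ := hz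
    have htz : t + z ≠ 0 := fun hcon => hzt (by linarith)
    have hdiff_nonneg : (0:ℝ) ≤ |g (r*(t+z)) - g (r*z) - h t z| ^ α :=
      Real.rpow_nonneg (abs_nonneg _) _
    rw [Real.norm_eq_abs, abs_of_nonneg hdiff_nonneg]
    by_cases hzK : |z| ≤ K
    · -- small z
      have hrz_ne : r * z ≠ 0 := mul_ne_zero hrpos.ne' hz0
      have hrtz_ne : r * (t+z) ≠ 0 := mul_ne_zero hrpos.ne' htz
      have hrδ : r * (2*K) < δ := by
        have : r * (2*K) < r₀ * (2*K) := by nlinarith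
        have h2 : r₀ * (2*K) ≤ δ := by
          rw [le_div_iff₀ (by positivity : (0:ℝ) < 2*K)] at hr₀1
          exact hr₀1
        linarith
      have hb1 : |r * z| < δ := by
        rw [abs_mul, abs_of_pos hrpos]
        nlinarith
      have hb2 : |r * (t+z)| < δ := by
        rw [abs_mul, abs_of_pos hrpos]
        have : |t + z| ≤ |t| + |z| := abs_add_le _ _
        nlinarith
      have hg1 : |g (r * (t+z))| ≤ M := hM _ hrtz_ne hb2
      have hg2 : |g (r * z)| ≤ M := hM _ hrz_ne hb1
      have hle : |g (r*(t+z)) - g (r*z) - h t z| ≤ 2*M + |c₀p - c₀m| := by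
        have t1 : |g (r*(t+z)) - g (r*z) - h t z| ≤ |g (r*(t+z)) - g (r*z)| + |h t z| :=
          abs_sub _ _
        have t2 : |g (r*(t+z)) - g (r*z)| ≤ |g (r*(t+z))| + |g (r*z)| := abs_sub _ _
        have t3 := habs_h z
        linarith
      have : |g (r*(t+z)) - g (r*z) - h t z| ^ α ≤ C1 :=
        Real.rpow_le_rpow (abs_nonneg _) hle hα0.le
      simpa [bound, hzK] using this
    · -- large z
      push_neg at hzK
      have hh0 : h t z = 0 := hfar z (htK.trans hzK)
      have hrz_ne : r * z ≠ 0 := mul_ne_zero hrpos.ne' hz0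
      have hrtη : |r * t| < η := by
        rw [abs_mul, abs_of_pos hrpos]
        have h4 : r₀ * K ≤ η := by
          rw [le_div_iff₀ hKpos] at hr₀2
          exact hr₀2
        calc r * |t| ≤ r * K := mul_le_mul_of_nonneg_left htK.le hrpos.le
        _ < r₀ * K := mul_lt_mul_of_pos_right hrlt hKpos
        _ ≤ η := h4
      have hb := hinc (r*z) hrz_ne (r*t) hrtη
      have heq : r * z + r * t = r * (t + z) := by ring
      rw [heq] at hb
      have hrw : c * |r*t| ^ a * |r*z| ^ (-a) = c * |t| ^ a * |z| ^ (-a) := by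
        rw [abs_mul, abs_mul, abs_of_pos hrpos,
          Real.mul_rpow hrpos.le (abs_nonneg t), Real.mul_rpow hrpos.le (abs_nonneg z)]
        have : r ^ a * r ^ (-a) = 1 := by
          rw [← Real.rpow_add hrpos]; simp
        linear_combination (c * |t| ^ a * |z| ^ (-a)) * this
      rw [hrw] at hb
      have hpow : |g (r*(t+z)) - g (r*z) - h t z| ^ α ≤ (c * |t| ^ a * |z| ^ (-a)) ^ α := by
        rw [hh0, sub_zero]
        exact Real.rpow_le_rpow (abs_nonneg _) hb hα0.le
      have hsplit : (c * |t| ^ a * |z| ^ (-a)) ^ α = C2 * |z| ^ (-(a*α)) := by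
        rw [Real.mul_rpow (by positivity) (Real.rpow_nonneg (abs_nonneg z) _),
          ← Real.rpow_mul (abs_nonneg z), neg_mul]
      rw [hsplit] at hpow
      simpa [bound, not_le.2 hzK] using hpow
  -- integrable bound
  · have hIoi : IntegrableOn bound (Ioi K) := by
      have h1 : IntegrableOn (fun z : ℝ => z ^ (-(a*α))) (Ioi K) :=
        integrableOn_Ioi_rpow_of_lt (by linarith) hKpos
      have h2 : IntegrableOn (fun z : ℝ => C2 * z ^ (-(a*α))) (Ioi K) := h1.const_mul C2
      refine h2.congr_fun (fun z hz => ?_) measurableSet_Ioi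
      have hzK : K < |z| := by
        rw [abs_of_pos (hKpos.trans hz)]; exact hz
      simp only [bound, if_neg (not_le.2 hzK), abs_of_pos (hKpos.trans hz)]
    have hIio : IntegrableOn bound (Iio (-K)) := by
      have heq : bound ∘ Neg.neg = bound := funext fun z => by
        simp [bound, abs_neg]
      have h3 : IntegrableOn (bound ∘ Neg.neg) (Neg.neg ⁻¹' (Ioi K)) volume :=
        ((Measure.measurePreserving_neg (volume : Measure ℝ)).integrableOn_comp_preimage
          (Homeomorph.neg ℝ).measurableEmbedding).2 hIoi
      have hpre : (Neg.neg ⁻¹' (Ioi K) : Set ℝ) = Iio (-K) := by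
        ext x; simp [lt_neg]
      rwa [heq, hpre] at h3
    have hIcc : IntegrableOn bound (Icc (-K) K) := by
      have hconst : IntegrableOn (fun _ : ℝ => C1) (Icc (-K) K) volume :=
        integrableOn_const measure_Icc_lt_top.ne
      refine hconst.congr_fun (fun z hz => ?_) measurableSet_Icc
      simp only [bound, if_pos (abs_le.2 ⟨hz.1, hz.2⟩)]
    rw [← integrableOn_univ]
    have huniv : (univ : Set ℝ) = Iio (-K) ∪ Icc (-K) K ∪ Ioi K := by
      ext x
      simp only [mem_univ, mem_union, mem_Iio, mem_Icc, mem_Ioi, true_iff]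
      by_cases h1 : x < -K
      · tauto
      · push_neg at h1
        by_cases hx2 : x ≤ K
        · exact Or.inl (Or.inr ⟨h1, hx2⟩)
        · push_neg at hx2; exact Or.inr hx2
    rw [huniv]
    exact (hIio.union hIcc).union hIoi
  -- pointwise limit
  · filter_upwards [hae] with z hz
    obtain ⟨hz0, hzt⟩ := hz
    have htz : t + z ≠ 0 := fun hcon => hzt (by linarith)
    set L : ℝ → ℝ := fun w => if 0 < w then c₀p else c₀m with hLdef
    have hgl : ∀ w : ℝ, w ≠ 0 → Tendsto (fun r : ℝ => g (r * w)) (𝓝[>] (0:ℝ)) (𝓝 (L w)) := by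
      intro w hw
      rcases hw.lt_or_gt with hneg | hpos
      · simpa [hLdef, not_lt.2 hneg.le] using hgl_neg w hneg
      · simpa [hLdef, hpos] using hgl_pos w hpos
    have hLh : L (t+z) - L z - h t z = 0 := by
      rcases hz0.lt_or_gt with hzneg | hzpos <;> rcases htz.lt_or_gt with htzneg | htzpos
      · -- z < 0, t + z < 0 : both limits c₀m and h t z = 0
        have hh0 : h t z = 0 := by
          rw [hh]
          split_ifs with ht0
          · rw [Set.indicator_of_notMem]
            · ring
            · simp only [Set.mem_Icc, not_and]
              intro _; linarith
          · rw [Set.indicator_of_notMem]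
            · ring
            · simp only [Set.mem_Icc, not_and]
              intro _; linarith
        rw [hh0]
        simp [hLdef, not_lt.2 htzneg.le, not_lt.2 hzneg.le]
      · -- z < 0, t + z > 0 : t > 0
        have ht0 : 0 ≤ t := by linarith
        have hmem : -z ∈ Icc (0:ℝ) t := ⟨by linarith, by linarith⟩
        rw [hh, if_pos ht0, Set.indicator_of_mem hmem]
        simp only [hLdef, if_pos htzpos, not_lt.2 hzneg.le, if_neg, if_false]
        ring
      · -- z > 0, t + z < 0 : t < 0
        have ht0 : ¬ (0:ℝ) ≤ t := by push_neg; linarith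
        have hmem : -z ∈ Icc t (0:ℝ) := ⟨by linarith, by linarith⟩
        rw [hh, if_neg ht0, Set.indicator_of_mem hmem]
        simp only [hLdef, if_neg (not_lt.2 htzneg.le), if_pos hzpos]
        ring
      · -- z > 0, t + z > 0 : both limits c₀p and h t z = 0
        have hh0 : h t z = 0 := by
          rw [hh]
          split_ifs with ht0
          · rw [Set.indicator_of_notMem]
            · ring
            · simp only [Set.mem_Icc, not_and_or]
              left; push_neg; linarith
          · rw [Set.indicator_of_notMem]
            · ring
            · simp only [Set.mem_Icc, not_and]
              intro _; linarith
        rw [hh0]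
        simp [hLdef, htzpos, hzpos]
    have hdiff : Tendsto (fun r : ℝ => g (r*(t+z)) - g (r*z) - h t z) (𝓝[>] (0:ℝ)) (𝓝 0) := by
      have := ((hgl (t+z) htz).sub (hgl z hz0)).sub
        (tendsto_const_nhds (x := h t z) (f := 𝓝[>] (0:ℝ)))
      rwa [hLh] at this
    have habsl : Tendsto (fun r : ℝ => |g (r*(t+z)) - g (r*z) - h t z|) (𝓝[>] (0:ℝ)) (𝓝 0) := by
      have := (continuous_abs.tendsto 0).comp hdiff
      simpa [Function.comp_def] using this
    have := ((Real.continuousAt_rpow_const 0 α (Or.inr hα0.le)).tendsto).comp habsl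
    simpa [Real.zero_rpow hα0.ne', Function.comp_def] using this
end

section
/- Let 0 < α ≤ 2 and let g : ℝ → ℝ be measurable. Suppose there exist γ, a, c, η, C, δ ∈ ℝ with c, C, η, δ > 0, γ > 0 and 0 < γ + 1/α < a ≤ 1 such that |g(u+h) − g(u)| ≤ c|h|^a |u|^{γ−a} for all u ∈ ℝ \ {0} and all |h| < η, and |g(u)| ≤ C|u|^γ for all |u| ≤ δ. Then there exist c₂ > 0 and η' > 0 such that for all h with |h| < η', ∫_ℝ |g(h − x) − g(−x)|^α dx ≤ c₂ |h|^{αγ+1}. -/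
open MeasureTheory Filter Topology Set

lemma aux_tail_int (q r : ℝ) (hq : q < -1) (hr : 0 < r) :
    IntegrableOn (fun x : ℝ => |x| ^ q) (Iio (-r) ∪ Ioi r) := by
  have hIoi : IntegrableOn (fun x : ℝ => |x| ^ q) (Ioi r) :=
    (integrableOn_Ioi_rpow_of_lt hq hr).congr_fun
      (fun x hx => by simp [abs_of_pos (hr.trans hx)]) measurableSet_Ioi
  have A : MeasurableEmbedding (fun x : ℝ => -x) :=
    (Homeomorph.neg ℝ).measurableEmbedding
  have hIio : IntegrableOn (fun x : ℝ => |x| ^ q) (Iio (-r)) := by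
    have h1 : IntegrableOn (fun x : ℝ => |x| ^ q) (Iio (-r))
        (Measure.map (fun x : ℝ => -x) volume) := by
      rw [A.integrableOn_map_iff]
      have hpre : (fun x : ℝ => -x) ⁻¹' (Iio (-r)) = Ioi r := by
        ext x
        simp only [mem_preimage, mem_Iio, mem_Ioi]
        constructor <;> intro <;> linarith
      rw [hpre]
      simpa [Function.comp_def, abs_neg] using hIoi
    rwa [Measure.map_neg_eq_self] at h1
  exact hIio.union hIoi

lemma aux_tail_val (q r : ℝ) (hq : q < -1) (hr : 0 < r) :
    ∫ x in (Iio (-r) ∪ Ioi r), |x| ^ q = 2 * (-r ^ (q + 1) / (q + 1)) := by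
  have hIoi : IntegrableOn (fun x : ℝ => |x| ^ q) (Ioi r) :=
    (integrableOn_Ioi_rpow_of_lt hq hr).congr_fun
      (fun x hx => by simp [abs_of_pos (hr.trans hx)]) measurableSet_Ioi
  have hIio : IntegrableOn (fun x : ℝ => |x| ^ q) (Iio (-r)) :=
    ((aux_tail_int q r hq hr).mono_set subset_union_left)
  have hIoi_val : ∫ x in Ioi r, |x| ^ q = -r ^ (q + 1) / (q + 1) := by
    rw [setIntegral_congr_fun measurableSet_Ioi
      (fun x hx => by simp [abs_of_pos (hr.trans hx)] : EqOn _ (fun x : ℝ => x ^ q) _)]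
    exact integral_Ioi_rpow_of_lt hq hr
  have hIio_val : ∫ x in Iio (-r), |x| ^ q = ∫ x in Ioi r, |x| ^ q := by
    rw [← integral_Iic_eq_integral_Iio]
    have : (∫ x in Iic (-r), |x| ^ q) = ∫ x in Iic (-r), |(-x)| ^ q := by
      simp [abs_neg]
    rw [this, integral_comp_neg_Iic (-r) (fun y : ℝ => |y| ^ q), neg_neg]
  have hdisj : Disjoint (Iio (-r)) (Ioi r) :=
    Disjoint.mono_left Iio_subset_Iic_self (Iic_disjoint_Ioi (by linarith))
  rw [setIntegral_union hdisj measurableSet_Ioi hIio hIoi, hIio_val, hIoi_val]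
  ring

/-- kernel increment estimate in L^α
(last part of the proof of Proposition 3.1). -/
theorem stmt_5 (α : ℝ) (hα0 : 0 < α) (hα2 : α ≤ 2) (g : ℝ → ℝ) (hmg : Measurable g)
    (γ a c η C δ : ℝ) (hc : 0 < c) (hC : 0 < C) (hη : 0 < η) (hδ : 0 < δ) (hγ : 0 < γ)
    (h1 : 0 < γ + 1 / α) (h2 : γ + 1 / α < a) (h3 : a ≤ 1)
    (hinc : ∀ u : ℝ, u ≠ 0 → ∀ h : ℝ, |h| < η →
      |g (u + h) - g u| ≤ c * |h| ^ a * |u| ^ (γ - a))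
    (hbd : ∀ u : ℝ, |u| ≤ δ → |g u| ≤ C * |u| ^ γ) :
    ∃ c₂ > (0:ℝ), ∃ η' > (0:ℝ), ∀ h : ℝ, |h| < η' →
      (∫ x : ℝ, |g (h - x) - g (-x)| ^ α) ≤ c₂ * |h| ^ (α * γ + 1) := by
  set q : ℝ := α * (γ - a) with hq_def
  have hq : q < -1 := by
    have h2' : α * (γ + 1 / α) < α * a := by
      exact mul_lt_mul_of_pos_left h2 hα0
    rw [mul_add, mul_one_div, div_self hα0.ne'] at h2'
    simp only [hq_def]; nlinarith
  have hq1 : q + 1 < 0 := by linarith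
  have hq1' : q + 1 ≠ 0 := by linarith
  refine ⟨6 * (2*C)^α * (4:ℝ)^(α*γ) + 2 * c^α * (3:ℝ)^(q+1) / (-(q+1)), ?_,
    min η (δ/4), by positivity, ?_⟩
  · have t1 : (0:ℝ) < 6 * (2*C)^α * (4:ℝ)^(α*γ) := by positivity
    have t2 : (0:ℝ) < 2 * c^α * (3:ℝ)^(q+1) / (-(q+1)) := by
      apply div_pos (by positivity); linarith
    linarith
  intro h hh
  rcases eq_or_ne h 0 with rfl | hne
  · simp [Real.zero_rpow hα0.ne',
      Real.zero_rpow (show (α*γ+1:ℝ) ≠ 0 by positivity)]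
  · set r : ℝ := |h| with hr_def
    have hr : 0 < r := abs_pos.mpr hne
    have hhη : r < η := lt_of_lt_of_le hh (min_le_left _ _)
    have hrδ : 4*r ≤ δ := by
      have := lt_of_lt_of_le hh (min_le_right _ _); linarith
    have h3r : (0:ℝ) < 3*r := by linarith
    set K₁ : ℝ := (2*C*(4*r)^γ)^α with hK₁
    set K₂ : ℝ := c^α * r^(α*a) with hK₂
    have hI1 : Integrable ((Icc (-(3*r)) (3*r)).indicator (fun _ => K₁)) := by
      rw [integrable_indicator_iff measurableSet_Icc]
      exact integrableOn_const (by rw [Real.volume_Icc]; exact ENNReal.ofReal_ne_top)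
    have htail := aux_tail_int q (3*r) hq h3r
    have hI2 : Integrable ((Iio (-(3*r)) ∪ Ioi (3*r)).indicator (fun x => K₂ * |x|^q)) := by
      rw [integrable_indicator_iff (measurableSet_Iio.union measurableSet_Ioi)]
      exact htail.const_mul K₂
    have tri : ∀ p s : ℝ, |p - s| ≤ |p| + |s| := by
      intro p s
      rw [sub_eq_add_neg]
      exact (abs_add_le _ _).trans (by rw [abs_neg])
    have hpt : ∀ x : ℝ, |g (h - x) - g (-x)| ^ α ≤
        (Icc (-(3*r)) (3*r)).indicator (fun _ => K₁) x
          + (Iio (-(3*r)) ∪ Ioi (3*r)).indicator (fun x => K₂ * |x|^q) x := by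
      intro x
      by_cases hx : |x| ≤ 3*r
      · have hx1 : x ∈ Icc (-(3*r)) (3*r) := by
          rw [mem_Icc]; exact abs_le.mp hx
        have hx2 : x ∉ Iio (-(3*r)) ∪ Ioi (3*r) := by
          rintro (h' | h')
          · rw [mem_Iio] at h'; have := (abs_le.mp hx).1; linarith
          · rw [mem_Ioi] at h'; have := (abs_le.mp hx).2; linarith
        rw [indicator_of_mem hx1, indicator_of_notMem hx2, add_zero]
        have hhx : |h - x| ≤ 4*r := by
          have := tri h x; simp only [← hr_def] at this; linarith
        have e1 : |g (h - x)| ≤ C * (4*r)^γ := by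
          calc |g (h-x)| ≤ C * |h-x|^γ := hbd _ (by linarith)
            _ ≤ C * (4*r)^γ := by gcongr
        have hnx : |(-x : ℝ)| ≤ 4*r := by rw [abs_neg]; linarith
        have e2 : |g (-x)| ≤ C * (4*r)^γ := by
          calc |g (-x)| ≤ C * |(-x)|^γ := hbd _ (by linarith)
            _ ≤ C * (4*r)^γ := by gcongr
        have e3 : |g (h - x) - g (-x)| ≤ 2*C*(4*r)^γ :=
          (tri _ _).trans (by linarith)
        exact Real.rpow_le_rpow (abs_nonneg _) e3 hα0.le
      · push_neg at hx
        have hx1 : x ∉ Icc (-(3*r)) (3*r) := by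
          intro hmem; rw [mem_Icc] at hmem
          exact absurd (abs_le.mpr hmem) (not_le.mpr hx)
        have hx2 : x ∈ Iio (-(3*r)) ∪ Ioi (3*r) := by
          rcases lt_abs.mp hx with h' | h'
          · exact Or.inr h'
          · exact Or.inl (by rw [mem_Iio]; linarith)
        rw [indicator_of_notMem hx1, indicator_of_mem hx2, zero_add]
        have hxne : (-x : ℝ) ≠ 0 := by
          intro h0
          have : x = 0 := by linarith [neg_eq_zero.mp h0]
          rw [this] at hx; simp at hx; linarith
        have hineq := hinc (-x) hxne h hhη
        rw [show -x + h = h - x by ring, abs_neg, ← hr_def] at hineq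
        calc |g (h - x) - g (-x)| ^ α ≤ (c * r^a * |x|^(γ-a)) ^ α :=
              Real.rpow_le_rpow (abs_nonneg _) hineq hα0.le
          _ = K₂ * |x| ^ q := by
              rw [Real.mul_rpow (by positivity) (Real.rpow_nonneg (abs_nonneg x) _),
                Real.mul_rpow hc.le (Real.rpow_nonneg hr.le _),
                ← Real.rpow_mul hr.le, ← Real.rpow_mul (abs_nonneg x),
                mul_comm a α, mul_comm (γ - a) α]
    have h0pt : ∀ x : ℝ, (0:ℝ) ≤ |g (h - x) - g (-x)| ^ α :=
      fun x => Real.rpow_nonneg (abs_nonneg _) _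
    have hmono := integral_mono_of_nonneg (μ := volume)
      (Eventually.of_forall h0pt) (hI1.add hI2) (Eventually.of_forall hpt)
    refine hmono.trans ?_
    simp only [Pi.add_apply]
    rw [integral_add hI1 hI2]
    have hint1 : ∫ x : ℝ, (Icc (-(3*r)) (3*r)).indicator (fun _ => K₁) x = (6*r) * K₁ := by
      rw [integral_indicator_const K₁ measurableSet_Icc, measureReal_def, Real.volume_Icc,
        ENNReal.toReal_ofReal (by linarith), smul_eq_mul]
      ring
    have hint2 : ∫ x : ℝ, (Iio (-(3*r)) ∪ Ioi (3*r)).indicator (fun x => K₂ * |x|^q) x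
        = K₂ * (2 * (-(3*r)^(q+1) / (q+1))) := by
      rw [integral_indicator (measurableSet_Iio.union measurableSet_Ioi),
        integral_const_mul, aux_tail_val q (3*r) hq h3r]
    rw [hint1, hint2]
    have eK₁ : K₁ = (2*C)^α * (4:ℝ)^(α*γ) * r^(α*γ) := by
      rw [hK₁, Real.mul_rpow (by positivity) (Real.rpow_nonneg (by positivity) _),
        ← Real.rpow_mul (by positivity : (0:ℝ) ≤ 4*r),
        Real.mul_rpow (by norm_num) hr.le, mul_comm γ α, mul_assoc]
    have e2 : ((3:ℝ)*r)^(q+1) = (3:ℝ)^(q+1) * r^(q+1) :=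
      Real.mul_rpow (by norm_num) hr.le
    have e3 : r^(α*a) * r^(q+1) = r^(α*γ+1) := by
      rw [← Real.rpow_add hr]; congr 1; rw [hq_def]; ring
    have e4 : r^(α*γ) * r = r^(α*γ+1) :=
      (Real.rpow_add_one hr.ne' (α*γ)).symm
    apply le_of_eq
    rw [eK₁, e2, hK₂]
    calc 6*r*((2*C)^α*(4:ℝ)^(α*γ)*r^(α*γ))
          + c^α*r^(α*a)*(2*(-((3:ℝ)^(q+1)*r^(q+1))/(q+1)))
        = 6*((2*C)^α*(4:ℝ)^(α*γ))*(r^(α*γ)*r)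
          + (2*c^α*(3:ℝ)^(q+1)/(-(q+1)))*(r^(α*a)*r^(q+1)) := by
          rw [div_neg]; ring
      _ = 6*((2*C)^α*(4:ℝ)^(α*γ))*r^(α*γ+1)
          + (2*c^α*(3:ℝ)^(q+1)/(-(q+1)))*r^(α*γ+1) := by rw [e3, e4]
      _ = (6*(2*C)^α*(4:ℝ)^(α*γ) + 2*c^α*(3:ℝ)^(q+1)/(-(q+1)))*r^(α*γ+1) := by ring
end

section
/- Let 6/5 < α ≤ 2 and define g : ℝ → ℝ by g(x) = 0 for x ≤ 0, g(x) = x^{1/6} for 0 < x ≤ 1, and g(x) = x^{−5/6} for x ≥ 1. Then for every t ∈ ℝ, lim_{r → 0⁺} ∫_ℝ |r^{−1/6}(g(r(t+z)) − g(rz)) − ((t+z)₊^{1/6} − z₊^{1/6})|^α dz = 0. -/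
open MeasureTheory Filter Topology Set

-- MVT estimate for rpow
lemma my_rpow_diff (p a u v : ℝ) (ha : 0 < a) (hp : p ≤ 1) (hu : a ≤ u) (hv : a ≤ v) :
    |u ^ p - v ^ p| ≤ |p| * a ^ (p - 1) * |u - v| := by
  have h := Convex.norm_image_sub_le_of_norm_hasDerivWithin_le
    (f := fun x : ℝ => x ^ p) (f' := fun x : ℝ => p * x ^ (p - 1)) (s := Ici a)
    (fun x hx => (Real.hasDerivAt_rpow_const (Or.inl (ne_of_gt (lt_of_lt_of_le ha hx)))).hasDerivWithinAt)
    (fun x hx => by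
      have hx0 : (0:ℝ) < x := lt_of_lt_of_le ha hx
      have : x ^ (p - 1) ≤ a ^ (p - 1) :=
        Real.rpow_le_rpow_of_nonpos ha hx (by linarith)
      calc ‖p * x ^ (p-1)‖ = |p| * x ^ (p-1) := by
            rw [norm_mul]; simp [abs_of_nonneg (Real.rpow_nonneg hx0.le _)]
        _ ≤ |p| * a ^ (p-1) := by
            exact mul_le_mul_of_nonneg_left this (abs_nonneg p))
    (convex_Ici a) hv hu
  simpa [Real.norm_eq_abs] using h

section G
variable {g : ℝ → ℝ}
  (hg : ∀ x : ℝ, g x =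
      if x ≤ 0 then 0 else if x ≤ 1 then x ^ (1/6 : ℝ) else x ^ (-(5/6) : ℝ))

include hg

lemma g_tail {x : ℝ} (hx : 1 ≤ x) : g x = x ^ (-(5/6) : ℝ) := by
  rw [hg x]
  rcases eq_or_lt_of_le hx with h | h
  · simp [← h]
  · rw [if_neg (by linarith), if_neg (by linarith)]

lemma g_head {x : ℝ} (hx : x ≤ 1) : g x = posPow x (1/6) := by
  rw [hg x, posPow]
  rcases le_or_gt x 0 with h | h
  · rw [if_pos h, if_neg (not_lt.2 h)]
  · rw [if_neg (not_le.2 h), if_pos hx, if_pos h]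

lemma g_lip {u v : ℝ} (hu : 1/2 ≤ u) (hv : 1/2 ≤ v) : |g u - g v| ≤ 3 * |u - v| := by
  have step1 : ∀ c d : ℝ, 1/2 ≤ c → 1/2 ≤ d → c ≤ 1 → d ≤ 1 → |g c - g d| ≤ 3 * |c - d| := by
    intro c d hc hd hc1 hd1
    have hc0 : (0:ℝ) < c := by linarith
    have hd0 : (0:ℝ) < d := by linarith
    rw [g_head hg hc1, g_head hg hd1, posPow, posPow, if_pos hc0, if_pos hd0]
    have h1 := my_rpow_diff (1/6) (1/2) c d (by norm_num) (by norm_num) hc hd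
    have h2 : |(1/6 : ℝ)| * (1/2 : ℝ) ^ (1/6 - 1 : ℝ) ≤ 3 := by
      have : ((1/2 : ℝ)) ^ (1/6 - 1 : ℝ) = 2 ^ (5/6 : ℝ) := by
        rw [show (1/6 - 1 : ℝ) = -(5/6) by norm_num,
          show ((1:ℝ)/2) = 2⁻¹ by norm_num, Real.inv_rpow (by norm_num),
          ← Real.rpow_neg (by norm_num), neg_neg]
      rw [this, abs_of_nonneg (by norm_num : (0:ℝ) ≤ 1/6)]
      have h3 : (2:ℝ) ^ (5/6 : ℝ) ≤ 2 ^ (1 : ℝ) :=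
        Real.rpow_le_rpow_of_exponent_le (by norm_num) (by norm_num)
      rw [Real.rpow_one] at h3
      nlinarith
    calc |c ^ (1/6:ℝ) - d ^ (1/6:ℝ)| ≤ |(1/6:ℝ)| * (1/2:ℝ) ^ (1/6 - 1 : ℝ) * |c - d| := h1
      _ ≤ 3 * |c - d| := mul_le_mul_of_nonneg_right h2 (abs_nonneg _)
  have step2 : ∀ c d : ℝ, 1 ≤ c → 1 ≤ d → |g c - g d| ≤ 3 * |c - d| := by
    intro c d hc hd
    rw [g_tail hg hc, g_tail hg hd]
    have h1 := my_rpow_diff (-(5/6)) 1 c d (by norm_num) (by norm_num) hc hd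
    have h2 : |(-(5/6) : ℝ)| * (1 : ℝ) ^ (-(5/6) - 1 : ℝ) ≤ 3 := by
      rw [Real.one_rpow]; rw [abs_of_nonpos (by norm_num : (-(5/6):ℝ) ≤ 0)]; norm_num
    calc |c ^ (-(5/6):ℝ) - d ^ (-(5/6):ℝ)| ≤ _ * |c - d| := h1
      _ ≤ 3 * |c - d| := mul_le_mul_of_nonneg_right h2 (abs_nonneg _)
  have key : ∀ w x : ℝ, 1/2 ≤ w → 1/2 ≤ x → w ≤ x → |g w - g x| ≤ 3 * |w - x| := by
    intro w x hw hx hwx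
    rcases le_or_gt x 1 with hx1 | hx1
    · exact step1 w x hw hx (hwx.trans hx1) hx1
    rcases le_or_gt 1 w with hw1 | hw1
    · exact step2 w x hw1 hx1.le
    · calc |g w - g x| ≤ |g w - g 1| + |g 1 - g x| := abs_sub_le _ _ _
        _ ≤ 3 * |w - 1| + 3 * |1 - x| :=
          add_le_add (step1 w 1 hw (by norm_num) hw1.le le_rfl)
            (step2 1 x le_rfl hx1.le)
        _ = 3 * |w - x| := by
          rw [abs_of_nonpos (by linarith), abs_of_nonpos (by linarith),
            abs_of_nonpos (by linarith)]
          ring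
  rcases le_total u v with h | h
  · exact key u v hu hv h
  · rw [abs_sub_comm (g u), abs_sub_comm u]; exact key v u hv hu h

lemma g_scale {r x : ℝ} (hr : 0 < r) (hx : r * x ≤ 1) :
    g (r * x) = r ^ (1/6 : ℝ) * posPow x (1/6) := by
  rw [g_head hg hx, posPow, posPow]
  rcases lt_or_ge 0 x with h | h
  · rw [if_pos h, if_pos (by positivity), ← Real.mul_rpow hr.le h.le]
  · rw [if_neg (not_lt.2 h), if_neg (not_lt.2 (by nlinarith)), mul_zero]
end G

lemma my_add_rpow_le {x y α : ℝ} (hx : 0 ≤ x) (hy : 0 ≤ y) (hα : 0 ≤ α) :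
    (x + y) ^ α ≤ 2 ^ α * (x ^ α + y ^ α) := by
  have h1 : x + y ≤ 2 * max x y := by
    rcases max_cases x y with ⟨h, h'⟩ | ⟨h, h'⟩ <;> rw [h] <;> linarith
  have h2 : (x + y) ^ α ≤ (2 * max x y) ^ α :=
    Real.rpow_le_rpow (by linarith) h1 hα
  have h3 : (2 * max x y : ℝ) ^ α = 2 ^ α * (max x y) ^ α :=
    Real.mul_rpow (by norm_num) (le_max_of_le_left hx)
  have h4 : (max x y) ^ α ≤ x ^ α + y ^ α := by
    rcases max_cases x y with ⟨h, _⟩ | ⟨h, _⟩ <;> rw [h]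
    · nlinarith [Real.rpow_nonneg hy α]
    · nlinarith [Real.rpow_nonneg hx α]
  calc (x + y) ^ α ≤ 2 ^ α * (max x y) ^ α := h3 ▸ h2
    _ ≤ 2 ^ α * (x ^ α + y ^ α) :=
      mul_le_mul_of_nonneg_left h4 (Real.rpow_nonneg (by norm_num) α)

section PW
variable {α t r z : ℝ} {g : ℝ → ℝ}
variable (hg : ∀ x : ℝ, g x =
      if x ≤ 0 then 0 else if x ≤ 1 then x ^ (1/6 : ℝ) else x ^ (-(5/6) : ℝ))

include hg in
lemma pointwise_bound (hα1 : 6/5 < α) (hr0 : 0 < r)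
    (hrr : r * (4*(|t|+1)) < 1) (hz : 1/r - |t| < z) :
    |(g (r * (t + z)) - g (r * z)) / r ^ (1/6 : ℝ) -
        (posPow (t + z) (1/6) - posPow z (1/6))| ^ α
      ≤ 2^α * ((if z ≤ 1/r + |t| then (3*|t| *r^(5/6:ℝ))^α
            else (4*|t|/r)^α * z^(-(11/6)*α)) + (2*|t|)^α * z^(-(5/6)*α)) := by
  have hα0 : (0:ℝ) < α := by linarith
  have h1r : r * (1/r) = 1 := mul_one_div_cancel hr0.ne'
  have hinv : 4*(|t|+1) < 1/r := by
    rw [lt_div_iff₀ hr0]; linarith [hrr, mul_comm r (4*(|t|+1))]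
  have habs : 0 ≤ |t| := abs_nonneg t
  have hrt : r * |t| ≤ 1/4 := by nlinarith
  have hz0 : 0 < z := by linarith
  have htz2 : 2 * |t| < z := by linarith
  have htz0 : 0 < t + z := by
    have := neg_abs_le t; linarith
  -- bound on the posPow difference
  have hb : |posPow (t + z) (1/6) - posPow z (1/6)| ≤ 2*|t| * z^(-(5/6):ℝ) := by
    rw [posPow, posPow, if_pos htz0, if_pos hz0]
    have h1 := my_rpow_diff (1/6) (z/2) (t+z) z (by linarith) (by norm_num)
      (by have := neg_abs_le t; linarith) (by linarith)
    have h2 : (z/2 : ℝ)^(1/6-1 : ℝ) = z^(-(5/6):ℝ) * 2^(5/6:ℝ) := by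
      rw [show (1/6-1:ℝ) = -(5/6) by norm_num, Real.div_rpow hz0.le (by norm_num),
        show (2:ℝ)^(-(5/6):ℝ) = (2^(5/6:ℝ))⁻¹ from Real.rpow_neg (by norm_num) _]
      field_simp
    have h25 : (2:ℝ)^(5/6:ℝ) ≤ 2 := by
      have := Real.rpow_le_rpow_of_exponent_le (by norm_num : (1:ℝ) ≤ 2)
        (by norm_num : (5/6:ℝ) ≤ 1)
      rwa [Real.rpow_one] at this
    have h3 : |t + z - z| = |t| := by rw [show t + z - z = t by ring]
    have hz56 : (0:ℝ) ≤ z^(-(5/6):ℝ) := Real.rpow_nonneg hz0.le _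
    rw [h2, h3, abs_of_nonneg (by norm_num : (0:ℝ) ≤ (1/6:ℝ))] at h1
    nlinarith [h1, mul_nonneg hz56 habs]
  have hr16 : (0:ℝ) < r^(1/6:ℝ) := Real.rpow_pos_of_pos hr0 _
  have habsdiff : |r * (t+z) - r * z| = r * |t| := by
    rw [show r * (t+z) - r * z = r * t by ring, abs_mul, abs_of_pos hr0]
  -- main split
  rcases le_or_gt z (1/r + |t|) with hzB | hzB
  · -- Lipschitz regime
    rw [if_pos hzB]
    have hrz : 3/4 ≤ r * z := by
      have h := mul_le_mul_of_nonneg_left hz.le hr0.le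
      have : r * (1/r - |t|) = 1 - r * |t| := by rw [mul_sub, h1r]
      linarith [this ▸ h]
    have hrtz : 1/2 ≤ r * (t + z) := by
      have h := mul_le_mul_of_nonneg_left (neg_abs_le t) hr0.le
      have h2 : r * (t + z) = r * t + r * z := by ring
      have h3 : r * -|t| = -(r * |t|) := by ring
      rw [h3] at h
      linarith
    have hlip := g_lip hg hrtz (by linarith : 1/2 ≤ r * z)
    rw [habsdiff] at hlip
    have ha : |(g (r * (t + z)) - g (r * z)) / r ^ (1/6:ℝ)| ≤ 3*|t| *r^(5/6:ℝ) := by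
      rw [abs_div, abs_of_pos hr16, div_le_iff₀ hr16]
      have hr56 : r ^ (5/6:ℝ) * r ^ (1/6:ℝ) = r := by
        rw [← Real.rpow_add hr0, show (5/6 + 1/6 : ℝ) = 1 by norm_num, Real.rpow_one]
      calc |g (r * (t + z)) - g (r * z)| ≤ 3 * (r * |t|) := hlip
        _ = 3*|t| * (r^(5/6:ℝ) * r^(1/6:ℝ)) := by rw [hr56]; ring
        _ = 3*|t| *r^(5/6:ℝ) * r^(1/6:ℝ) := by ring
    calc |(g (r * (t + z)) - g (r * z)) / r ^ (1/6 : ℝ) -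
            (posPow (t + z) (1/6) - posPow z (1/6))| ^ α
        ≤ (|(g (r * (t + z)) - g (r * z)) / r ^ (1/6 : ℝ)| +
            |posPow (t + z) (1/6) - posPow z (1/6)|) ^ α :=
          Real.rpow_le_rpow (abs_nonneg _) (abs_sub _ _) hα0.le
      _ ≤ 2^α * (|(g (r * (t + z)) - g (r * z)) / r ^ (1/6 : ℝ)|^α +
            |posPow (t + z) (1/6) - posPow z (1/6)|^α) :=
          my_add_rpow_le (abs_nonneg _) (abs_nonneg _) hα0.le
      _ ≤ 2^α * ((3*|t| *r^(5/6:ℝ))^α + (2*|t|)^α * z^(-(5/6)*α)) := by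
          gcongr 2^α * (?_ + ?_)
          · exact Real.rpow_le_rpow (abs_nonneg _) ha hα0.le
          · calc |posPow (t + z) (1/6) - posPow z (1/6)|^α
                ≤ (2*|t| * z^(-(5/6):ℝ))^α := Real.rpow_le_rpow (abs_nonneg _) hb hα0.le
              _ = (2*|t|)^α * z^(-(5/6)*α) := by
                  rw [Real.mul_rpow (by positivity) (Real.rpow_nonneg hz0.le _),
                    ← Real.rpow_mul hz0.le]
  · -- tail regime
    rw [if_neg (not_le.2 hzB)]
    have h1 : 1/r ≤ z - |t| := by linarith
    have hz1 : (1:ℝ) ≤ r * (z - |t|) := by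
      have := mul_le_mul_of_nonneg_left h1 hr0.le; rwa [h1r] at this
    have hztz : r * (z - |t|) ≤ r * (t + z) :=
      mul_le_mul_of_nonneg_left (by have := neg_abs_le t; linarith) hr0.le
    have hzz : r * (z - |t|) ≤ r * z :=
      mul_le_mul_of_nonneg_left (by linarith) hr0.le
    have hgu : g (r * (t + z)) = (r * (t+z)) ^ (-(5/6):ℝ) := g_tail hg (le_trans hz1 hztz)
    have hgw : g (r * z) = (r * z) ^ (-(5/6):ℝ) := g_tail hg (le_trans hz1 hzz)
    have h0 : 0 < r * (z - |t|) := by linarith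
    have hd := my_rpow_diff (-(5/6)) (r*(z-|t|)) (r*(t+z)) (r*z) h0 (by norm_num) hztz hzz
    rw [← hgu, ← hgw, habsdiff, show (-(5/6) - 1 : ℝ) = -(11/6) by norm_num,
      abs_of_nonpos (by norm_num : (-(5/6):ℝ) ≤ 0), neg_neg] at hd
    have hsplit : (r*(z-|t|))^(-(11/6):ℝ) = r^(-(11/6):ℝ) * (z-|t|)^(-(11/6):ℝ) :=
      Real.mul_rpow hr0.le (by linarith)
    have hmono : (z-|t|)^(-(11/6):ℝ) ≤ (z/2)^(-(11/6):ℝ) :=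
      Real.rpow_le_rpow_of_nonpos (by linarith : (0:ℝ) < z/2)
        (by linarith : z/2 ≤ z - |t|) (by norm_num)
    have hhalf : (z/2:ℝ)^(-(11/6):ℝ) = z^(-(11/6):ℝ) * 2^(11/6:ℝ) := by
      rw [Real.div_rpow hz0.le (by norm_num),
        show (2:ℝ)^(-(11/6):ℝ) = (2^(11/6:ℝ))⁻¹ from Real.rpow_neg (by norm_num) _]
      field_simp
    have h24 : (2:ℝ)^(11/6:ℝ) ≤ 4 := by
      have h := Real.rpow_le_rpow_of_exponent_le (by norm_num : (1:ℝ) ≤ 2)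
        (by norm_num : (11/6:ℝ) ≤ 2)
      have h4 : (2:ℝ)^(2:ℝ) = 4 := by
        rw [show (2:ℝ) = ((2:ℕ):ℝ) by norm_num, Real.rpow_natCast]; norm_num
      linarith [h4 ▸ h]
    have hA1 : r * r^(-(11/6):ℝ) = r^(-(5/6):ℝ) := by
      nth_rewrite 1 [← Real.rpow_one r]
      rw [← Real.rpow_add hr0]; norm_num
    have hA2 : r^(1/6:ℝ) / r = r^(-(5/6):ℝ) := by
      nth_rewrite 2 [← Real.rpow_one r]
      rw [← Real.rpow_sub hr0]; norm_num
    have ha : |(g (r * (t + z)) - g (r * z)) / r ^ (1/6:ℝ)| ≤ 4 * |t| / r * z^(-(11/6):ℝ) := by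
      rw [abs_div, abs_of_pos hr16, div_le_iff₀ hr16]
      have hz11 : (0:ℝ) ≤ z^(-(11/6):ℝ) := Real.rpow_nonneg hz0.le _
      have hr11 : (0:ℝ) ≤ r^(-(11/6):ℝ) := Real.rpow_nonneg hr0.le _
      have step : |g (r * (t + z)) - g (r * z)| ≤
          (5/6) * (r^(-(11/6):ℝ) * (z^(-(11/6):ℝ) * 4)) * (r * |t|) := by
        refine le_trans hd ?_
        have : (r*(z-|t|))^(-(11/6):ℝ) ≤ r^(-(11/6):ℝ) * (z^(-(11/6):ℝ) * 4) := by
          rw [hsplit]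
          refine mul_le_mul_of_nonneg_left ?_ hr11
          calc (z-|t|)^(-(11/6):ℝ) ≤ (z/2)^(-(11/6):ℝ) := hmono
            _ = z^(-(11/6):ℝ) * 2^(11/6:ℝ) := hhalf
            _ ≤ z^(-(11/6):ℝ) * 4 := mul_le_mul_of_nonneg_left h24 hz11
        exact mul_le_mul_of_nonneg_right
          (mul_le_mul_of_nonneg_left this (by norm_num)) (mul_nonneg hr0.le habs)
      refine le_trans step ?_
      have key : (5/6) * (r^(-(11/6):ℝ) * (z^(-(11/6):ℝ) * 4)) * (r * |t|)
          ≤ 4 * |t| * (z^(-(11/6):ℝ) * r^(-(5/6):ℝ)) := by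
        have e1 : (5/6) * (r^(-(11/6):ℝ) * (z^(-(11/6):ℝ) * 4)) * (r * |t|)
            = (10/3) * |t| * (z^(-(11/6):ℝ) * (r * r^(-(11/6):ℝ))) := by ring
        rw [e1, hA1,
          show (10/3) * |t| * (z^(-(11/6):ℝ) * r^(-(5/6):ℝ))
            = (10/3) * (|t| * (z^(-(11/6):ℝ) * r^(-(5/6):ℝ))) by ring,
          show 4 * |t| * (z^(-(11/6):ℝ) * r^(-(5/6):ℝ))
            = 4 * (|t| * (z^(-(11/6):ℝ) * r^(-(5/6):ℝ))) by ring]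
        exact mul_le_mul_of_nonneg_right (by norm_num)
          (mul_nonneg habs (mul_nonneg hz11 (Real.rpow_nonneg hr0.le _)))
      refine le_trans key (le_of_eq ?_)
      rw [show 4 * |t| / r * z^(-(11/6):ℝ) * r^(1/6:ℝ)
          = 4 * |t| * (z^(-(11/6):ℝ) * (r^(1/6:ℝ) / r)) by ring, hA2]
    calc |(g (r * (t + z)) - g (r * z)) / r ^ (1/6 : ℝ) -
            (posPow (t + z) (1/6) - posPow z (1/6))| ^ α
        ≤ (|(g (r * (t + z)) - g (r * z)) / r ^ (1/6 : ℝ)| +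
            |posPow (t + z) (1/6) - posPow z (1/6)|) ^ α :=
          Real.rpow_le_rpow (abs_nonneg _) (abs_sub _ _) hα0.le
      _ ≤ 2^α * (|(g (r * (t + z)) - g (r * z)) / r ^ (1/6 : ℝ)|^α +
            |posPow (t + z) (1/6) - posPow z (1/6)|^α) :=
          my_add_rpow_le (abs_nonneg _) (abs_nonneg _) hα0.le
      _ ≤ 2^α * ((4 * |t| / r)^α * z^(-(11/6)*α) + (2 * |t|)^α * z^(-(5/6)*α)) := by
          gcongr 2^α * (?_ + ?_)
          · calc |(g (r * (t + z)) - g (r * z)) / r ^ (1/6 : ℝ)|^α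
                ≤ (4 * |t| / r * z^(-(11/6):ℝ))^α :=
                  Real.rpow_le_rpow (abs_nonneg _) ha hα0.le
              _ = (4 * |t| / r)^α * z^(-(11/6)*α) := by
                  rw [Real.mul_rpow (by positivity) (Real.rpow_nonneg hz0.le _),
                    ← Real.rpow_mul hz0.le]
          · calc |posPow (t + z) (1/6) - posPow z (1/6)|^α
                ≤ (2 * |t| * z^(-(5/6):ℝ))^α := Real.rpow_le_rpow (abs_nonneg _) hb hα0.le
              _ = (2 * |t|)^α * z^(-(5/6)*α) := by
                  rw [Real.mul_rpow (by positivity) (Real.rpow_nonneg hz0.le _),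
                    ← Real.rpow_mul hz0.le]

end PW
lemma vanish {α t r z : ℝ} {g : ℝ → ℝ} (hg : ∀ x : ℝ, g x =
      if x ≤ 0 then 0 else if x ≤ 1 then x ^ (1/6 : ℝ) else x ^ (-(5/6) : ℝ))
    (hα0 : α ≠ 0) (hr0 : 0 < r) (hz1 : r * z ≤ 1) (hz2 : r * (t + z) ≤ 1) :
    |(g (r * (t + z)) - g (r * z)) / r ^ (1/6 : ℝ) -
        (posPow (t + z) (1/6) - posPow z (1/6))| ^ α = 0 := by
  rw [g_scale hg hr0 hz2, g_scale hg hr0 hz1, ← mul_sub,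
    mul_div_cancel_left₀ _ (ne_of_gt (Real.rpow_pos_of_pos hr0 (1/6:ℝ))), sub_self,
    abs_zero, Real.zero_rpow hα0]

lemma dom_integral {α t r : ℝ} (hα1 : 6/5 < α) (hr0 : 0 < r)
    (hrr : r * (4*(|t|+1)) < 1) :
    IntegrableOn (fun z : ℝ => 2^α * ((if z ≤ 1/r + |t| then (3 * |t| * r^(5/6:ℝ))^α
        else (4 * |t| / r)^α * z^(-(11/6)*α)) + (2 * |t|)^α * z^(-(5/6)*α)))
      (Ioi (1/r - |t|)) ∧
    ∫ z in Ioi (1/r - |t|), (2^α * ((if z ≤ 1/r + |t| then (3 * |t| * r^(5/6:ℝ))^α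
        else (4 * |t| / r)^α * z^(-(11/6)*α)) + (2 * |t|)^α * z^(-(5/6)*α)))
      ≤ 2^α * ((3 * |t| * r^(5/6:ℝ))^α * (2 * |t|)
        + (4 * |t|)^α * r^(5*α/6 - 1) / (11*α/6 - 1)
        + (2 * |t|)^α * (2*r)^(5*α/6 - 1) / (5*α/6 - 1)) := by
  have hα0 : (0:ℝ) < α := by linarith
  have he1 : (-(5/6)*α : ℝ) < -1 := by linarith
  have he2 : (-(11/6)*α : ℝ) < -1 := by linarith
  have habs : (0:ℝ) ≤ |t| := abs_nonneg t
  have hinv : 4*(|t|+1) < 1/r := by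
    rw [lt_div_iff₀ hr0]; linarith [mul_comm r (4*(|t|+1))]
  set A : ℝ := 1/r - |t| with hA_def
  set B : ℝ := 1/r + |t| with hB_def
  have hA0 : 0 < A := by rw [hA_def]; linarith
  have hB0 : 0 < B := by rw [hB_def]; linarith
  have hAB : A ≤ B := by rw [hA_def, hB_def]; linarith
  set m1 : ℝ := (3 * |t| * r^(5/6:ℝ))^α with hm1_def
  set m2 : ℝ := (4 * |t| / r)^α with hm2_def
  set m3 : ℝ := (2 * |t|)^α with hm3_def
  set P : ℝ → ℝ := fun z => if z ≤ B then m1 else m2 * z^(-(11/6)*α) with hP_def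
  set Q : ℝ → ℝ := fun z => m3 * z^(-(5/6)*α) with hQ_def
  have hQint : IntegrableOn Q (Ioi A) :=
    (integrableOn_Ioi_rpow_of_lt he1 hA0).const_mul m3
  have hsplit : Ioi A = Ioc A B ∪ Ioi B := (Ioc_union_Ioi_eq_Ioi hAB).symm
  have hPIoc : IntegrableOn P (Ioc A B) := by
    refine ((integrableOn_const_iff (C := m1)).2 (Or.inr measure_Ioc_lt_top)).congr_fun
      (fun z hz => ?_) measurableSet_Ioc
    simp only [hP_def, if_pos hz.2]
  have hPIoiB : IntegrableOn P (Ioi B) := by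
    refine IntegrableOn.congr_fun
      (f := fun z : ℝ => m2 * z ^ (-(11/6)*α))
      ((integrableOn_Ioi_rpow_of_lt he2 hB0).const_mul m2)
      (fun z hz => ?_) measurableSet_Ioi
    simp only [hP_def, if_neg (not_le.2 (mem_Ioi.mp hz))]
  have hPint : IntegrableOn P (Ioi A) := by
    rw [hsplit]; exact hPIoc.union hPIoiB
  have hDint : IntegrableOn (fun z => 2^α * (P z + Q z)) (Ioi A) :=
    ((hPint.add hQint)).const_mul _
  constructor
  · exact hDint
  -- compute the integrals
  have hIoc : ∫ z in Ioc A B, P z = m1 * (2 * |t|) := by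
    rw [setIntegral_congr_fun measurableSet_Ioc
      (fun z hz => by simp only [hP_def, if_pos hz.2] : EqOn P (fun _ => m1) (Ioc A B)),
      setIntegral_const, Real.volume_real_Ioc_of_le hAB,
      smul_eq_mul, hB_def, hA_def]
    ring
  have hIoiB : ∫ z in Ioi B, P z = m2 * (-B^((-(11/6)*α)+1)/((-(11/6)*α)+1)) := by
    rw [setIntegral_congr_fun measurableSet_Ioi
      (fun z hz => by simp only [hP_def, if_neg (not_le.2 (mem_Ioi.mp hz))] :
        EqOn P (fun z => m2 * z^(-(11/6)*α)) (Ioi B)),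
      MeasureTheory.integral_const_mul, integral_Ioi_rpow_of_lt he2 hB0]
  have hIoiQ : ∫ z in Ioi A, Q z = m3 * (-A^((-(5/6)*α)+1)/((-(5/6)*α)+1)) := by
    rw [hQ_def, MeasureTheory.integral_const_mul, integral_Ioi_rpow_of_lt he1 hA0]
  have hIoiP : ∫ z in Ioi A, P z
      = m1 * (2 * |t|) + m2 * (-B^((-(11/6)*α)+1)/((-(11/6)*α)+1)) := by
    rw [hsplit, setIntegral_union (Ioc_disjoint_Ioi le_rfl) measurableSet_Ioi hPIoc hPIoiB,
      hIoc, hIoiB]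
  have htotal : ∫ z in Ioi A, 2^α * (P z + Q z)
      = 2^α * ((∫ z in Ioi A, P z) + ∫ z in Ioi A, Q z) := by
    rw [MeasureTheory.integral_const_mul, integral_add hPint hQint]
  -- bounds on the two tail terms
  have hk2 : (0:ℝ) < 11*α/6 - 1 := by linarith
  have hk1 : (0:ℝ) < 5*α/6 - 1 := by linarith
  have hT2 : m2 * (-B^((-(11/6)*α)+1)/((-(11/6)*α)+1))
      ≤ (4 * |t|)^α * r^(5*α/6 - 1) / (11*α/6 - 1) := by
    have hBpow : B^((-(11/6)*α)+1) ≤ r^(11*α/6 - 1) := by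
      have h1 : 1/r ≤ B := by rw [hB_def]; linarith
      have h2 : B^((-(11/6)*α)+1) ≤ (1/r)^((-(11/6)*α)+1) :=
        Real.rpow_le_rpow_of_nonpos (by rw [one_div]; exact inv_pos.2 hr0) h1 (by linarith)
      have h3 : ((1:ℝ)/r)^((-(11/6)*α)+1) = r^(11*α/6 - 1) := by
        rw [one_div, Real.inv_rpow hr0.le, ← Real.rpow_neg hr0.le,
          show (-(-(11/6)*α + 1) : ℝ) = 11*α/6 - 1 by ring]
      linarith [h3 ▸ h2]
    have hrw : -B^((-(11/6)*α)+1)/((-(11/6)*α)+1) = B^((-(11/6)*α)+1)/(11*α/6 - 1) := by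
      rw [show ((-(11/6)*α)+1 : ℝ) = -(11*α/6 - 1) by ring, div_neg, neg_div, neg_neg]
    rw [hrw, hm2_def, Real.div_rpow (by positivity) hr0.le]
    calc (4 * |t|)^α / r^α * (B^((-(11/6)*α)+1)/(11*α/6 - 1))
        ≤ (4 * |t|)^α / r^α * (r^(11*α/6 - 1)/(11*α/6 - 1)) := by
          gcongr
      _ = (4 * |t|)^α * (r^(11*α/6 - 1) / r^α) / (11*α/6 - 1) := by ring
      _ = (4 * |t|)^α * r^(5*α/6 - 1) / (11*α/6 - 1) := by
          rw [← Real.rpow_sub hr0, show (11*α/6 - 1 - α : ℝ) = 5*α/6 - 1 by ring]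
  have hT3 : m3 * (-A^((-(5/6)*α)+1)/((-(5/6)*α)+1))
      ≤ (2 * |t|)^α * (2*r)^(5*α/6 - 1) / (5*α/6 - 1) := by
    have h2r : (0:ℝ) < 2*r := by linarith
    have hApow : A^((-(5/6)*α)+1) ≤ (2*r)^(5*α/6 - 1) := by
      have h1 : 1/(2*r) ≤ A := by
        have : 1/(2*r) = (1/r)/2 := by ring
        rw [hA_def, this]; linarith
      have h2 : A^((-(5/6)*α)+1) ≤ (1/(2*r))^((-(5/6)*α)+1) :=
        Real.rpow_le_rpow_of_nonpos (by rw [one_div]; exact inv_pos.2 h2r) h1 (by linarith)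
      have h3 : ((1:ℝ)/(2*r))^((-(5/6)*α)+1) = (2*r)^(5*α/6 - 1) := by
        rw [one_div, Real.inv_rpow h2r.le, ← Real.rpow_neg h2r.le,
          show (-(-(5/6)*α + 1) : ℝ) = 5*α/6 - 1 by ring]
      linarith [h3 ▸ h2]
    have hrw : -A^((-(5/6)*α)+1)/((-(5/6)*α)+1) = A^((-(5/6)*α)+1)/(5*α/6 - 1) := by
      rw [show ((-(5/6)*α)+1 : ℝ) = -(5*α/6 - 1) by ring, div_neg, neg_div, neg_neg]
    rw [hrw, hm3_def]
    calc (2 * |t|)^α * (A^((-(5/6)*α)+1)/(5*α/6 - 1))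
        ≤ (2 * |t|)^α * ((2*r)^(5*α/6 - 1)/(5*α/6 - 1)) := by
          gcongr
      _ = (2 * |t|)^α * (2*r)^(5*α/6 - 1) / (5*α/6 - 1) := by ring
  calc ∫ z in Ioi A, 2^α * (P z + Q z)
      = 2^α * ((m1 * (2 * |t|) + m2 * (-B^((-(11/6)*α)+1)/((-(11/6)*α)+1)))
          + m3 * (-A^((-(5/6)*α)+1)/((-(5/6)*α)+1))) := by rw [htotal, hIoiP, hIoiQ]
    _ ≤ 2^α * ((m1 * (2 * |t|) + (4 * |t|)^α * r^(5*α/6 - 1) / (11*α/6 - 1))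
          + (2 * |t|)^α * (2*r)^(5*α/6 - 1) / (5*α/6 - 1)) := by
        refine mul_le_mul_of_nonneg_left (add_le_add (add_le_add le_rfl hT2) hT3)
          (Real.rpow_nonneg (by norm_num) α)
    _ = 2^α * (m1 * (2 * |t|) + (4 * |t|)^α * r^(5*α/6 - 1) / (11*α/6 - 1)
          + (2 * |t|)^α * (2*r)^(5*α/6 - 1) / (5*α/6 - 1)) := by ring


/-- L^α convergence underlying Example 3.1. -/
theorem stmt_7 (α : ℝ) (hα1 : 6/5 < α) (hα2 : α ≤ 2) (g : ℝ → ℝ)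
    (hg : ∀ x : ℝ, g x =
      if x ≤ 0 then 0 else if x ≤ 1 then x ^ (1/6 : ℝ) else x ^ (-(5/6) : ℝ)) :
    ∀ t : ℝ,
      Tendsto (fun r : ℝ => ∫ z : ℝ,
          |(g (r * (t + z)) - g (r * z)) / r ^ (1/6 : ℝ) -
            (posPow (t + z) (1/6) - posPow z (1/6))| ^ α)
        (𝓝[>] 0) (𝓝 0) := by
  intro t
  have hα0 : (0:ℝ) < α := by linarith
  have hp2 : (0:ℝ) < 5*α/6 - 1 := by linarith
  set r₀ : ℝ := 1/(4*(|t|+1)) with hr₀_def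
  have hr₀0 : 0 < r₀ := by positivity
  have hH : Tendsto (fun r : ℝ => 2^α * ((3 * |t| * r^(5/6:ℝ))^α * (2 * |t|)
        + (4 * |t|)^α * r^(5*α/6 - 1) / (11*α/6 - 1)
        + (2 * |t|)^α * (2*r)^(5*α/6 - 1) / (5*α/6 - 1))) (𝓝[>] (0:ℝ)) (𝓝 0) := by
    have hbase : Tendsto (fun r : ℝ => r) (𝓝[>] (0:ℝ)) (𝓝 0) :=
      Filter.tendsto_id.mono_left nhdsWithin_le_nhds
    have hpow : ∀ p : ℝ, 0 < p → Tendsto (fun x : ℝ => x^p) (𝓝 (0:ℝ)) (𝓝 0) := by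
      intro p hp
      have h := (Real.continuousAt_rpow_const 0 p (Or.inr hp.le)).tendsto
      rwa [Real.zero_rpow hp.ne'] at h
    have h1 : Tendsto (fun r : ℝ => (3 * |t| * r^(5/6:ℝ))^α * (2 * |t|))
        (𝓝[>] (0:ℝ)) (𝓝 0) := by
      have ha : Tendsto (fun r : ℝ => 3 * |t| * r^(5/6:ℝ)) (𝓝[>] (0:ℝ)) (𝓝 0) := by
        have h2 := (((hpow (5/6) (by norm_num)).comp hbase).const_mul (3 * |t|))
        simpa using h2
      have hb := (hpow α hα0).comp ha
      have hc := hb.mul_const (2 * |t|)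
      simpa using hc
    have h2 : Tendsto (fun r : ℝ => (4 * |t|)^α * r^(5*α/6 - 1) / (11*α/6 - 1))
        (𝓝[>] (0:ℝ)) (𝓝 0) := by
      have := (((hpow _ hp2).comp hbase).const_mul ((4 * |t|)^α)).div_const (11*α/6 - 1)
      simpa using this
    have h3 : Tendsto (fun r : ℝ => (2 * |t|)^α * (2*r)^(5*α/6 - 1) / (5*α/6 - 1))
        (𝓝[>] (0:ℝ)) (𝓝 0) := by
      have h2r : Tendsto (fun r : ℝ => 2*r) (𝓝[>] (0:ℝ)) (𝓝 (0:ℝ)) := by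
        have := hbase.const_mul (2:ℝ); simpa using this
      have := (((hpow _ hp2).comp h2r).const_mul ((2 * |t|)^α)).div_const (5*α/6 - 1)
      simpa using this
    have hsum := (h1.add h2).add h3
    have hfin := hsum.const_mul (2^α : ℝ)
    simpa using hfin
  refine squeeze_zero' (Filter.Eventually.of_forall fun r =>
    integral_nonneg fun z => Real.rpow_nonneg (abs_nonneg _) α) ?_ hH
  filter_upwards [Ioo_mem_nhdsGT_of_mem (Set.mem_Ico.mpr ⟨le_rfl, hr₀0⟩)] with r hr
  obtain ⟨hr0, hrsmall⟩ := hr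
  have h4c : (0:ℝ) < 4*(|t|+1) := by positivity
  have hrr : r * (4*(|t|+1)) < 1 := by
    have h := mul_lt_mul_of_pos_right hrsmall h4c
    have he : r₀ * (4*(|t|+1)) = 1 := by rw [hr₀_def]; field_simp
    linarith
  obtain ⟨hDint, hDbnd⟩ := dom_integral (α := α) (t := t) (r := r) hα1 hr0 hrr
  have h1r : r * (1/r) = 1 := mul_one_div_cancel hr0.ne'
  have habs : (0:ℝ) ≤ |t| := abs_nonneg t
  have hzero : ∀ z ∉ Ioi (1/r - |t|),
      |(g (r * (t + z)) - g (r * z)) / r ^ (1/6 : ℝ) -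
        (posPow (t + z) (1/6) - posPow z (1/6))| ^ α = 0 := by
    intro z hz
    have hzA : z ≤ 1/r - |t| := not_lt.1 hz
    have hz1 : r * z ≤ 1 := by
      nlinarith [mul_le_mul_of_nonneg_left hzA hr0.le, mul_nonneg hr0.le habs]
    have hz2 : r * (t + z) ≤ 1 := by
      have hle : t + z ≤ 1/r := by have := le_abs_self t; linarith
      have h := mul_le_mul_of_nonneg_left hle hr0.le
      linarith
    exact vanish hg hα0.ne' hr0 hz1 hz2
  calc ∫ z : ℝ, |(g (r * (t + z)) - g (r * z)) / r ^ (1/6 : ℝ) -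
          (posPow (t + z) (1/6) - posPow z (1/6))| ^ α
      = ∫ z in Ioi (1/r - |t|), |(g (r * (t + z)) - g (r * z)) / r ^ (1/6 : ℝ) -
          (posPow (t + z) (1/6) - posPow z (1/6))| ^ α :=
        (setIntegral_eq_integral_of_forall_compl_eq_zero hzero).symm
    _ ≤ ∫ z in Ioi (1/r - |t|), (2^α * ((if z ≤ 1/r + |t| then (3 * |t| * r^(5/6:ℝ))^α
          else (4 * |t| / r)^α * z^(-(11/6)*α)) + (2 * |t|)^α * z^(-(5/6)*α))) := by
        refine integral_mono_of_nonneg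
          (Filter.Eventually.of_forall fun z => Real.rpow_nonneg (abs_nonneg _) α)
          hDint ?_
        refine (ae_restrict_iff' measurableSet_Ioi).2
          (Filter.Eventually.of_forall fun z hz => ?_)
        exact pointwise_bound hg hα1 hr0 hrr hz
    _ ≤ 2^α * ((3 * |t| * r^(5/6:ℝ))^α * (2 * |t|)
          + (4 * |t|)^α * r^(5*α/6 - 1) / (11*α/6 - 1)
          + (2 * |t|)^α * (2*r)^(5*α/6 - 1) / (5*α/6 - 1)) := hDbnd
end

section
/- Let 1 < α < 2 and γ ∈ (−1/α, 1/2 − 1/α). Define g : ℝ \ {0} → ℝ by g(x) = 2(γ+1)|x|^γ ∫_{|x|}^{∞} v^{−γ−2} sin v dv − 2 x^{−1} sin x. Then g ∈ L^α(ℝ), i.e. ∫_ℝ |g(x)|^α dx < ∞. -/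
open MeasureTheory Filter Topology Set
open scoped ENNReal

/-- the explicit inverse Fourier transform of Example 3.2
belongs to L^α. -/
theorem stmt_8 (α γ : ℝ) (hα1 : 1 < α) (hα2 : α < 2)
    (hγ1 : -(1/α) < γ) (hγ2 : γ < 1/2 - 1/α)
    (g : ℝ → ℝ) (hmg : Measurable g)
    (hg : ∀ x : ℝ, x ≠ 0 → g x =
      2 * (γ + 1) * |x| ^ γ * (∫ v in Set.Ioi |x|, v ^ (-γ - 2) * Real.sin v)
        - 2 * x⁻¹ * Real.sin x) :
    ∫⁻ x : ℝ, ENNReal.ofReal (|g x| ^ α) < ⊤ := by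
  have hα0 : (0:ℝ) < α := by linarith
  have h2 : 1/2 < 1/α := one_div_lt_one_div_of_lt hα0 hα2
  have hγ0 : γ < 0 := by linarith
  have h1 : 1/α < 1 := by rw [div_lt_one hα0]; exact hα1
  have hγm1 : -1 < γ := by linarith
  have hγ1' : 0 < γ + 1 := by linarith
  have hia : (1/α) * α = 1 := one_div_mul_cancel hα0.ne'
  have hγα : -1 < γ * α := by nlinarith
  -- integrability of v^(-γ-2) on Ioi r
  have hint2 : ∀ r : ℝ, 0 < r → IntegrableOn (fun v : ℝ => v ^ (-γ-2)) (Ioi r) :=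
    fun r hr => integrableOn_Ioi_rpow_of_lt (by linarith) hr
  have hmf : Measurable (fun v : ℝ => v ^ (-γ-2) * Real.sin v) := by fun_prop
  -- integrability of the integrand
  have hintf : ∀ r : ℝ, 0 < r →
      IntegrableOn (fun v : ℝ => v ^ (-γ-2) * Real.sin v) (Ioi r) := by
    intro r hr
    refine Integrable.mono (hint2 r hr) hmf.aestronglyMeasurable ?_
    filter_upwards [ae_restrict_mem measurableSet_Ioi] with v hv
    have hv0 : (0:ℝ) < v := hr.trans hv
    rw [Real.norm_eq_abs, Real.norm_eq_abs, abs_mul, abs_of_nonneg (Real.rpow_nonneg hv0.le _)]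
    nth_rewrite 2 [← mul_one (v ^ (-γ-2))]
    exact mul_le_mul_of_nonneg_left ((Real.abs_sin_le_one v)) (Real.rpow_nonneg hv0.le _)
  -- big r estimate
  have hbig : ∀ r : ℝ, 0 < r →
      |∫ v in Ioi r, v ^ (-γ-2) * Real.sin v| ≤ r ^ (-(γ+1)) / (γ+1) := by
    intro r hr
    calc |∫ v in Ioi r, v ^ (-γ-2) * Real.sin v|
        ≤ ∫ v in Ioi r, |v ^ (-γ-2) * Real.sin v| := by
          simpa [Real.norm_eq_abs, abs_mul] using norm_integral_le_integral_norm (μ := volume.restrict (Ioi r)) (fun v : ℝ => v ^ (-γ-2) * Real.sin v)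
      _ ≤ ∫ v in Ioi r, v ^ (-γ-2) := by
          refine setIntegral_mono_on (hintf r hr).abs (hint2 r hr) measurableSet_Ioi ?_
          intro v hv
          have hv0 : (0:ℝ) < v := hr.trans hv
          rw [abs_mul, abs_of_nonneg (Real.rpow_nonneg hv0.le _)]
          nth_rewrite 2 [← mul_one (v ^ (-γ-2))]
          exact mul_le_mul_of_nonneg_left ((Real.abs_sin_le_one v)) (Real.rpow_nonneg hv0.le _)
      _ = r ^ (-(γ+1)) / (γ+1) := by
          rw [integral_Ioi_rpow_of_lt (by linarith) hr]
          rw [show -γ-2+1 = -(γ+1) by ring, neg_div, div_neg, neg_neg]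

  -- small r estimate
  set C : ℝ := (∫ v in Ioc (0:ℝ) 1, v ^ (-γ-1)) + ∫ v in Ioi (1:ℝ), v ^ (-γ-2) with hC_def
  have hInt1 : IntegrableOn (fun v : ℝ => v ^ (-γ-1)) (Ioc 0 1) := by
    rw [← intervalIntegrable_iff_integrableOn_Ioc_of_le zero_le_one]
    exact intervalIntegral.intervalIntegrable_rpow' (by linarith)
  have hInt2b : IntegrableOn (fun v : ℝ => v ^ (-γ-2)) (Ioi 1) :=
    integrableOn_Ioi_rpow_of_lt (by linarith) one_pos
  set h : ℝ → ℝ := fun v => min (v ^ (-γ-1)) (v ^ (-γ-2)) with hh_def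
  have hmh : Measurable h := by fun_prop
  have hh_nonneg : ∀ v : ℝ, 0 ≤ v → 0 ≤ h v :=
    fun v hv => le_min (Real.rpow_nonneg hv _) (Real.rpow_nonneg hv _)
  have hInth1 : IntegrableOn h (Ioc 0 1) := by
    refine Integrable.mono hInt1 hmh.aestronglyMeasurable ?_
    filter_upwards [ae_restrict_mem measurableSet_Ioc] with v hv
    rw [Real.norm_eq_abs, Real.norm_eq_abs, abs_of_nonneg (hh_nonneg v hv.1.le),
      abs_of_nonneg (Real.rpow_nonneg hv.1.le _)]
    exact min_le_left _ _
  have hInth2 : IntegrableOn h (Ioi 1) := by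
    refine Integrable.mono hInt2b hmh.aestronglyMeasurable ?_
    filter_upwards [ae_restrict_mem measurableSet_Ioi] with v hv
    have hv0 : (0:ℝ) ≤ v := (one_pos.trans hv).le
    rw [Real.norm_eq_abs, Real.norm_eq_abs, abs_of_nonneg (hh_nonneg v hv0),
      abs_of_nonneg (Real.rpow_nonneg hv0 _)]
    exact min_le_right _ _
  have hIoiU : Ioc (0:ℝ) 1 ∪ Ioi 1 = Ioi 0 := Ioc_union_Ioi_eq_Ioi zero_le_one
  have hInth : IntegrableOn h (Ioi 0) := by rw [← hIoiU]; exact hInth1.union hInth2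
  have habsf : ∀ v : ℝ, 0 < v → |v ^ (-γ-2) * Real.sin v| ≤ h v := by
    intro v hv
    rw [abs_mul, abs_of_nonneg (Real.rpow_nonneg hv.le _)]
    refine le_min ?_ ?_
    · have : v ^ (-γ-2) * |Real.sin v| ≤ v ^ (-γ-2) * v := by
        refine mul_le_mul_of_nonneg_left ?_ (Real.rpow_nonneg hv.le _)
        simpa [abs_of_pos hv] using Real.abs_sin_le_abs (x := v)
      refine this.trans (le_of_eq ?_)
      rw [show -γ-1 = -γ-2+1 by ring, Real.rpow_add_one hv.ne']
    · nth_rewrite 2 [← mul_one (v ^ (-γ-2))]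
      exact mul_le_mul_of_nonneg_left (Real.abs_sin_le_one v) (Real.rpow_nonneg hv.le _)
  have hC0 : 0 ≤ C :=
    add_nonneg (setIntegral_nonneg measurableSet_Ioc fun v hv => Real.rpow_nonneg hv.1.le _)
      (setIntegral_nonneg measurableSet_Ioi fun v hv => Real.rpow_nonneg (one_pos.trans hv).le _)
  have hsmall : ∀ r : ℝ, 0 < r → |∫ v in Ioi r, v ^ (-γ-2) * Real.sin v| ≤ C := by
    intro r hr
    calc |∫ v in Ioi r, v ^ (-γ-2) * Real.sin v|
        ≤ ∫ v in Ioi r, |v ^ (-γ-2) * Real.sin v| := by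
          simpa [Real.norm_eq_abs, abs_mul] using norm_integral_le_integral_norm
            (μ := volume.restrict (Ioi r)) (fun v : ℝ => v ^ (-γ-2) * Real.sin v)
      _ ≤ ∫ v in Ioi r, h v := by
          refine setIntegral_mono_on (hintf r hr).abs
            (hInth.mono_set (Ioi_subset_Ioi hr.le)) measurableSet_Ioi ?_
          intro v hv
          exact habsf v (hr.trans hv)
      _ ≤ ∫ v in Ioi 0, h v := by
          refine setIntegral_mono_set hInth ?_ (HasSubset.Subset.eventuallyLE (Ioi_subset_Ioi hr.le))
          filter_upwards [ae_restrict_mem measurableSet_Ioi] with v hv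
          exact hh_nonneg v hv.le
      _ = (∫ v in Ioc (0:ℝ) 1, h v) + ∫ v in Ioi (1:ℝ), h v := by
          rw [← hIoiU]
          exact setIntegral_union (Ioc_disjoint_Ioi le_rfl) measurableSet_Ioi hInth1 hInth2
      _ ≤ C := by
          refine add_le_add ?_ ?_
          · exact setIntegral_mono_on hInth1 hInt1 measurableSet_Ioc fun v hv => min_le_left _ _
          · exact setIntegral_mono_on hInth2 hInt2b measurableSet_Ioi fun v hv => min_le_right _ _
  -- the dominating function
  set K : ℝ := 2 * (γ + 1) * C + 2 with hK_def
  have hK0 : 0 < K := by nlinarith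
  set B : ℝ → ℝ := fun x => if |x| ≤ 1 then K * |x| ^ γ else 4 * |x|⁻¹ with hB_def
  have hbound : ∀ x : ℝ, x ≠ 0 → |g x| ≤ B x := by
    intro x hx
    have hr : 0 < |x| := abs_pos.2 hx
    have hrγ0 : (0:ℝ) ≤ |x| ^ γ := Real.rpow_nonneg hr.le _
    rw [hg x hx]
    have htri : |2 * (γ + 1) * |x| ^ γ * (∫ v in Ioi |x|, v ^ (-γ - 2) * Real.sin v)
        - 2 * x⁻¹ * Real.sin x|
        ≤ |2 * (γ + 1) * |x| ^ γ * (∫ v in Ioi |x|, v ^ (-γ - 2) * Real.sin v)|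
          + |2 * x⁻¹ * Real.sin x| := abs_sub _ _
    have hA : |2 * (γ + 1) * |x| ^ γ * (∫ v in Ioi |x|, v ^ (-γ - 2) * Real.sin v)|
        = 2 * (γ + 1) * |x| ^ γ * |∫ v in Ioi |x|, v ^ (-γ - 2) * Real.sin v| := by
      rw [abs_mul]
      congr 1
      exact abs_of_nonneg (by positivity)
    have hB2 : |2 * x⁻¹ * Real.sin x| = 2 * |x|⁻¹ * |Real.sin x| := by
      rw [abs_mul, abs_mul, abs_inv]
      norm_num
    have hIeq : ∀ v : ℝ, v ^ (-γ - 2) * Real.sin v = v ^ (-γ-2) * Real.sin v := fun v => by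
      norm_num
    by_cases hle : |x| ≤ 1
    · rw [hB_def]
      simp only [if_pos hle]
      have hI : |∫ v in Ioi |x|, v ^ (-γ - 2) * Real.sin v| ≤ C := by
        simpa using hsmall |x| hr
      have hsinx : |Real.sin x| ≤ |x| := Real.abs_sin_le_abs
      have h2nd : 2 * |x|⁻¹ * |Real.sin x| ≤ 2 := by
        have h1 : |x|⁻¹ * |Real.sin x| ≤ 1 := by
          rw [← inv_mul_cancel₀ hr.ne']
          exact mul_le_mul_of_nonneg_left hsinx (inv_nonneg.2 hr.le)
        nlinarith
      have hrγ : 1 ≤ |x| ^ γ := Real.one_le_rpow_of_pos_of_le_one_of_nonpos hr hle hγ0.le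
      have hIabs : (0:ℝ) ≤ |∫ v in Ioi |x|, v ^ (-γ - 2) * Real.sin v| := abs_nonneg _
      calc |2 * (γ + 1) * |x| ^ γ * (∫ v in Ioi |x|, v ^ (-γ - 2) * Real.sin v)
            - 2 * x⁻¹ * Real.sin x|
          ≤ 2 * (γ + 1) * |x| ^ γ * |∫ v in Ioi |x|, v ^ (-γ - 2) * Real.sin v|
            + 2 * |x|⁻¹ * |Real.sin x| := by rw [← hA, ← hB2]; exact htri
        _ ≤ 2 * (γ + 1) * |x| ^ γ * C + 2 := by
            refine add_le_add ?_ h2nd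
            exact mul_le_mul_of_nonneg_left hI (by positivity)
        _ ≤ K * |x| ^ γ := by rw [hK_def]; nlinarith
    · rw [hB_def]
      simp only [if_neg hle]
      push_neg at hle
      have hI : |∫ v in Ioi |x|, v ^ (-γ - 2) * Real.sin v| ≤ |x| ^ (-(γ+1)) / (γ+1) := by
        simpa using hbig |x| hr
      have hsin1 : |Real.sin x| ≤ 1 := Real.abs_sin_le_one x
      have hpow : |x| ^ γ * |x| ^ (-(γ+1)) = |x|⁻¹ := by
        rw [← Real.rpow_add hr, show γ + -(γ+1) = -1 by ring, Real.rpow_neg_one]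
      have hinv0 : (0:ℝ) ≤ |x|⁻¹ := inv_nonneg.2 hr.le
      have hX0 : (0:ℝ) ≤ |x| ^ (-(γ+1)) := Real.rpow_nonneg hr.le _
      calc |2 * (γ + 1) * |x| ^ γ * (∫ v in Ioi |x|, v ^ (-γ - 2) * Real.sin v)
            - 2 * x⁻¹ * Real.sin x|
          ≤ 2 * (γ + 1) * |x| ^ γ * |∫ v in Ioi |x|, v ^ (-γ - 2) * Real.sin v|
            + 2 * |x|⁻¹ * |Real.sin x| := by rw [← hA, ← hB2]; exact htri
        _ ≤ 2 * (γ + 1) * |x| ^ γ * (|x| ^ (-(γ+1)) / (γ+1)) + 2 * |x|⁻¹ * 1 := by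
            refine add_le_add (mul_le_mul_of_nonneg_left hI (by positivity)) ?_
            exact mul_le_mul_of_nonneg_left hsin1 (by positivity)
        _ = 4 * |x|⁻¹ := by
            rw [← hpow]
            field_simp
            ring
  -- measurability of B
  have hmB : Measurable B := by
    refine Measurable.ite (measurableSet_le (by fun_prop) measurable_const) ?_ ?_
    · fun_prop
    · fun_prop
  -- reduce to the dominating function
  have key : ∫⁻ x : ℝ, ENNReal.ofReal (|g x| ^ α)
      ≤ ∫⁻ x : ℝ, ENNReal.ofReal (B x ^ α) := by
    refine lintegral_mono_ae ?_
    have hne : ∀ᵐ x : ℝ, x ≠ 0 := by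
      refine compl_mem_ae_iff.mpr ?_
      exact measure_mono_null (fun x hx => hx) (measure_singleton (0:ℝ))
    filter_upwards [hne] with x hx
    exact ENNReal.ofReal_le_ofReal
      (Real.rpow_le_rpow (abs_nonneg _) (hbound x hx) hα0.le)
  refine lt_of_le_of_lt key ?_
  -- B is even
  have hBeven : ∀ x : ℝ, B (-x) = B x := by intro x; simp [hB_def, abs_neg]
  set F : ℝ → ℝ≥0∞ := fun x => ENNReal.ofReal (B x ^ α) with hF_def
  -- finiteness over (0,1]
  have hfin1 : ∫⁻ x in Ioc (0:ℝ) 1, F x < ⊤ := by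
    have hφ : IntegrableOn (fun x : ℝ => K ^ α * x ^ (γ * α)) (Ioc 0 1) := by
      refine Integrable.const_mul ?_ _
      exact (intervalIntegrable_iff_integrableOn_Ioc_of_le zero_le_one).1
        (intervalIntegral.intervalIntegrable_rpow' hγα)
    refine lt_of_le_of_lt ?_ hφ.2
    refine setLIntegral_mono (by fun_prop) ?_
    intro x hx
    show ENNReal.ofReal (B x ^ α) ≤ _
    have hx0 : 0 < x := hx.1
    have hBx : B x = K * x ^ γ := by
      rw [hB_def]
      simp only
      rw [abs_of_pos hx0, if_pos hx.2]
    have hBxα : B x ^ α = K ^ α * x ^ (γ * α) := by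
      rw [hBx, Real.mul_rpow hK0.le (Real.rpow_nonneg hx0.le _),
        Real.rpow_mul hx0.le]
    rw [hBxα, Real.enorm_eq_ofReal_abs]
    exact ENNReal.ofReal_le_ofReal (le_abs_self _)
  -- finiteness over (1,∞)
  have hfin2 : ∫⁻ x in Ioi (1:ℝ), F x < ⊤ := by
    have hφ : IntegrableOn (fun x : ℝ => (4:ℝ) ^ α * x ^ (-α)) (Ioi 1) := by
      refine Integrable.const_mul ?_ _
      exact integrableOn_Ioi_rpow_of_lt (by linarith) one_pos
    refine lt_of_le_of_lt ?_ hφ.2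
    refine setLIntegral_mono (by fun_prop) ?_
    intro x hx
    show ENNReal.ofReal (B x ^ α) ≤ _
    have hx0 : (0:ℝ) < x := one_pos.trans hx
    have hBx : B x = 4 * x⁻¹ := by
      rw [hB_def]
      simp only
      rw [abs_of_pos hx0, if_neg (not_le.2 hx)]
    have hBxα : B x ^ α = (4:ℝ) ^ α * x ^ (-α) := by
      rw [hBx, Real.mul_rpow (by norm_num) (inv_nonneg.2 hx0.le),
        ← Real.rpow_neg_one x, ← Real.rpow_mul hx0.le, neg_one_mul]
    rw [hBxα, Real.enorm_eq_ofReal_abs]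
    exact ENNReal.ofReal_le_ofReal (le_abs_self _)
  -- finiteness over the positive half line
  have hfinpos : ∫⁻ x in Ioi (0:ℝ), F x < ⊤ := by
    rw [← hIoiU, lintegral_union measurableSet_Ioi (Ioc_disjoint_Ioi le_rfl)]
    exact ENNReal.add_lt_top.2 ⟨hfin1, hfin2⟩
  -- symmetry for the negative half line
  have hfinneg : ∫⁻ x in Iic (0:ℝ), F x = ∫⁻ x in Ioi (0:ℝ), F x := by
    have hneg := (Measure.measurePreserving_neg (volume : Measure ℝ)).setLIntegral_comp_preimage_emb
      (MeasurableEquiv.neg ℝ).measurableEmbedding F (Iic 0)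
    have hpre : (Neg.neg ⁻¹' (Iic (0:ℝ))) = Ici 0 := by
      ext y; simp
    have hFe : ∀ x : ℝ, F (-x) = F x := fun x => by rw [hF_def]; simp only [hBeven]
    rw [hpre] at hneg
    simp only [hFe] at hneg
    rw [← hneg]
    exact (setLIntegral_congr (Ioi_ae_eq_Ici (a := (0:ℝ)))).symm
  have := lintegral_add_compl (μ := (volume : Measure ℝ)) F (measurableSet_Ioi (a := (0:ℝ)))
  rw [compl_Ioi] at this
  rw [← this]
  rw [hfinneg]
  exact ENNReal.add_lt_top.2 ⟨hfinpos, hfinpos⟩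
end

section
/- Let 0 < α ≤ 2, let g ∈ L^α(ℝ) be measurable, and let γ, a, c ∈ ℝ with c > 0 and 0 < γ + 1/α < a ≤ 1. Suppose in addition there are C > 0, x₀ > 0 and β > 1/α such that |g(x)| ≤ C|x|^{−β} for all |x| ≥ x₀. For positive integers ω, Ω set A_{ω,Ω} = (2c^α/((1+aα) ω^{1+γα})) Σ_{j=1}^{ωΩ} j^{−(a−γ)α} + ∫_{−∞}^{−Ω} |g(s)|^α ds + ∫_{Ω}^{∞} |g(s)|^α ds. Then there is a constant K, independent of ω and Ω, such that A_{ω,Ω} ≤ K (ω^{−1−αγ} + Ω^{1−αβ}) for all positive integers ω and all integers Ω ≥ x₀. -/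
open MeasureTheory Filter Topology Set

/-- The bound `A_{ω,Ω}` of Proposition 5.1. -/
noncomputable def Abound (α c a γ : ℝ) (g : ℝ → ℝ) (ω Ω : ℕ) : ℝ :=
  (2 * c ^ α / ((1 + a * α) * (ω : ℝ) ^ (1 + γ * α))) *
      (∑ j ∈ Finset.Icc 1 (ω * Ω), ((j : ℝ)) ^ (-((a - γ) * α)))
  + (∫ s in Set.Iic (-(Ω : ℝ)), |g s| ^ α)
  + ∫ s in Set.Ici (Ω : ℝ), |g s| ^ α

/-- Tail estimate: if `|h x| ≤ C x^(-β)` on `[T, ∞)` with `T > 0` and `αβ > 1`, then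
the integral of `|h|^α` over `[T, ∞)` is at most `C^α/(αβ-1) * T^(1-αβ)`. -/
lemma tail_bound (α C β T : ℝ) (hα0 : 0 < α) (hC : 0 ≤ C) (hβα : 1 < α * β) (hT : 0 < T)
    (h : ℝ → ℝ) (hint : IntegrableOn (fun x => |h x| ^ α) (Ici T))
    (hb : ∀ x : ℝ, T ≤ x → |h x| ≤ C * x ^ (-β)) :
    ∫ x in Ici T, |h x| ^ α ≤ C ^ α / (α * β - 1) * T ^ (1 - α * β) := by
  set q : ℝ := -(α * β) with hq
  have hq1 : q < -1 := by simp only [hq]; linarith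
  have hintR : IntegrableOn (fun x : ℝ => C ^ α * x ^ q) (Ici T) := by
    rw [integrableOn_Ici_iff_integrableOn_Ioi]
    exact (integrableOn_Ioi_rpow_of_lt hq1 hT).const_mul _
  have hstep : ∫ x in Ici T, |h x| ^ α ≤ ∫ x in Ici T, C ^ α * x ^ q := by
    refine setIntegral_mono_on hint hintR measurableSet_Ici ?_
    intro x hx
    have hx0 : 0 < x := lt_of_lt_of_le hT hx
    have h1 : |h x| ^ α ≤ (C * x ^ (-β)) ^ α :=
      Real.rpow_le_rpow (abs_nonneg _) (hb x hx) hα0.le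
    have h2 : (C * x ^ (-β)) ^ α = C ^ α * x ^ q := by
      rw [Real.mul_rpow hC (Real.rpow_nonneg hx0.le _), ← Real.rpow_mul hx0.le]
      congr 1
      rw [hq]; ring
    linarith [h2 ▸ h1]
  have hcalc : ∫ x in Ici T, C ^ α * x ^ q = C ^ α * (-T ^ (q + 1) / (q + 1)) := by
    rw [integral_Ici_eq_integral_Ioi, MeasureTheory.integral_const_mul, integral_Ioi_rpow_of_lt hq1 hT]
  have hexp : q + 1 = 1 - α * β := by simp [hq]; ring
  have hfin : C ^ α * (-T ^ (q + 1) / (q + 1)) = C ^ α / (α * β - 1) * T ^ (1 - α * β) := by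
    rw [hexp, show (1:ℝ) - α * β = -(α * β - 1) by ring]
    rw [neg_div_neg_eq]
    ring
  calc ∫ x in Ici T, |h x| ^ α ≤ ∫ x in Ici T, C ^ α * x ^ q := hstep
    _ = C ^ α / (α * β - 1) * T ^ (1 - α * β) := by rw [hcalc, hfin]

/-- quantitative bound (5.3) of Corollary 5.1. -/
theorem stmt_13 (α : ℝ) (hα0 : 0 < α) (hα2 : α ≤ 2) (g : ℝ → ℝ) (hmg : Measurable g)
    (hgLα : Integrable (fun x : ℝ => |g x| ^ α))
    (γ a c : ℝ) (hc : 0 < c)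
    (h1 : 0 < γ + 1 / α) (h2 : γ + 1 / α < a) (h3 : a ≤ 1)
    (C x₀ β : ℝ) (hC : 0 < C) (hx₀ : 0 < x₀) (hβ : 1 / α < β)
    (hdecay : ∀ x : ℝ, x₀ ≤ |x| → |g x| ≤ C * |x| ^ (-β)) :
    ∃ K : ℝ, ∀ ω Ω : ℕ, 0 < ω → 0 < Ω → x₀ ≤ (Ω : ℝ) →
      Abound α c a γ g ω Ω ≤ K * ((ω : ℝ) ^ (-1 - α * γ) + (Ω : ℝ) ^ (1 - α * β)) := by
  -- setup
  have hβα : 1 < α * β := by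
    have : (1 / α) * α < β * α := mul_lt_mul_of_pos_right hβ hα0
    rw [one_div, inv_mul_cancel₀ hα0.ne'] at this
    linarith [this, mul_comm β α]
  have ha0 : 0 < a := lt_trans h1 h2
  have haα : 0 < 1 + a * α := by positivity
  have hp : 1 < (a - γ) * α := by
    have h' : 1 / α < a - γ := by linarith
    have : (1 / α) * α < (a - γ) * α := mul_lt_mul_of_pos_right h' hα0
    rwa [one_div, inv_mul_cancel₀ hα0.ne'] at this
  have hsum : Summable (fun n : ℕ => (n : ℝ) ^ (-((a - γ) * α))) :=
    Real.summable_nat_rpow.mpr (by linarith)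
  set S : ℝ := ∑' n : ℕ, (n : ℝ) ^ (-((a - γ) * α)) with hS
  have hS0 : 0 ≤ S := tsum_nonneg fun n => Real.rpow_nonneg (Nat.cast_nonneg n) _
  set K1 : ℝ := 2 * c ^ α / (1 + a * α) * S with hK1
  have hK10 : 0 ≤ K1 := by positivity
  set K2 : ℝ := C ^ α / (α * β - 1) with hK2
  have hK20 : 0 ≤ K2 := div_nonneg (by positivity) (by linarith)
  refine ⟨K1 + 2 * K2, ?_⟩
  intro ω Ω hω hΩ hΩx₀
  have hωR : (0 : ℝ) < ω := Nat.cast_pos.mpr hω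
  have hΩR : (0 : ℝ) < Ω := lt_of_lt_of_le hx₀ hΩx₀
  set x : ℝ := (ω : ℝ) ^ (-1 - α * γ) with hx
  set y : ℝ := (Ω : ℝ) ^ (1 - α * β) with hy
  have hx0 : 0 ≤ x := Real.rpow_nonneg hωR.le _
  have hy0 : 0 ≤ y := Real.rpow_nonneg hΩR.le _
  -- term 1
  have hpart : ∑ j ∈ Finset.Icc 1 (ω * Ω), ((j : ℝ)) ^ (-((a - γ) * α)) ≤ S :=
    Summable.sum_le_tsum _ (fun i _ => Real.rpow_nonneg (Nat.cast_nonneg i) _) hsum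
  have hωpow : (0 : ℝ) < (ω : ℝ) ^ (1 + γ * α) := Real.rpow_pos_of_pos hωR _
  have hcoef : 0 ≤ 2 * c ^ α / ((1 + a * α) * (ω : ℝ) ^ (1 + γ * α)) := by positivity
  have hinv : ((ω : ℝ) ^ (1 + γ * α))⁻¹ = x := by
    rw [hx, ← Real.rpow_neg hωR.le]
    congr 1
    ring
  have hterm1 : (2 * c ^ α / ((1 + a * α) * (ω : ℝ) ^ (1 + γ * α))) *
      (∑ j ∈ Finset.Icc 1 (ω * Ω), ((j : ℝ)) ^ (-((a - γ) * α))) ≤ K1 * x := by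
    have h' := mul_le_mul_of_nonneg_left hpart hcoef
    have heq : (2 * c ^ α / ((1 + a * α) * (ω : ℝ) ^ (1 + γ * α))) * S = K1 * x := by
      rw [hK1, ← hinv, ← div_div]
      ring
    linarith [heq ▸ h']
  -- right tail
  have hsum2 : (∑ j ∈ Finset.Icc 1 (ω * Ω), ((j : ℝ)) ^ (-((a - γ) * α))) ≤ S := hpart
  have hright : ∫ s in Ici (Ω : ℝ), |g s| ^ α ≤ K2 * y := by
    have := tail_bound α C β (Ω : ℝ) hα0 hC.le hβα hΩR g hgLα.integrableOn
      (fun s hs => by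
        have hs0 : (0 : ℝ) < s := lt_of_lt_of_le hΩR hs
        have habs : |s| = s := abs_of_pos hs0
        have := hdecay s (by rw [habs]; linarith)
        rwa [habs] at this)
    rw [hK2, hy]; linarith
  -- left tail
  have hleft : ∫ s in Iic (-(Ω : ℝ)), |g s| ^ α ≤ K2 * y := by
    have hchg : ∫ s in Iic (-(Ω : ℝ)), |g s| ^ α = ∫ s in Ici (Ω : ℝ), |g (-s)| ^ α := by
      rw [integral_Ici_eq_integral_Ioi,
        integral_comp_neg_Ioi (Ω : ℝ) (fun s => |g s| ^ α)]
    rw [hchg]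
    have hintneg : IntegrableOn (fun s : ℝ => |g (-s)| ^ α) (Ici (Ω : ℝ)) :=
      (hgLα.comp_neg).integrableOn
    have := tail_bound α C β (Ω : ℝ) hα0 hC.le hβα hΩR (fun s => g (-s)) hintneg
      (fun s hs => by
        have hs0 : (0 : ℝ) < s := lt_of_lt_of_le hΩR hs
        have habs : |(-s)| = s := by rw [abs_neg, abs_of_pos hs0]
        have := hdecay (-s) (by rw [habs]; linarith)
        rwa [habs] at this)
    rw [hK2, hy]; exact this
  -- combine
  have hKx : 0 ≤ K1 * y := mul_nonneg hK10 hy0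
  have hKy : 0 ≤ 2 * K2 * x := by positivity
  unfold Abound
  nlinarith [hterm1, hright, hleft]
end

section
/- Let 0 < α ≤ 2 and define g : ℝ → ℝ by g(x) = e^{x} for x ≤ 0 and g(x) = 0 for x > 0. Then for all positive integers ω, Ω, E_g(ω,Ω) ≤ (2^α/(1+α)) · ((1 − e^{−αΩ})/(e^{α/ω} − 1)) · ω^{−(1+α)} + e^{−αΩ}/α. -/
open MeasureTheory Filter Topology Set

/-- The discretization-plus-truncation simulation error `E_g(ω,Ω)`. -/
noncomputable def Eg (α : ℝ) (g : ℝ → ℝ) (ω Ω : ℕ) : ℝ :=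
  (∑ j ∈ Finset.Icc (-(ω * Ω : ℤ) + 1) 0,
      ∫ s in Set.Icc (((j : ℝ) - 1) / ω) ((j : ℝ) / ω), |g (((j : ℝ) - 1) / ω) - g s| ^ α)
  + (∑ j ∈ Finset.Icc (1 : ℤ) (ω * Ω : ℤ),
      ∫ s in Set.Icc (((j : ℝ) - 1) / ω) ((j : ℝ) / ω), |g ((j : ℝ) / ω) - g s| ^ α)
  + (∫ s in Set.Iic (-(Ω : ℝ)), |g s| ^ α)
  + ∫ s in Set.Ici (Ω : ℝ), |g s| ^ α

/- auxiliary: `exp u ≤ 1 + 2u` on `[0,1]` -/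
lemma aux_exp_le (u : ℝ) (h0 : 0 ≤ u) (h1 : u ≤ 1) : Real.exp u ≤ 1 + 2 * u := by
  have h := Real.exp_bound' h0 h1 (n := 1) one_pos
  simp [Finset.sum_range_one] at h
  linarith

/- auxiliary: one-interval discretization bound -/
lemma aux_step (α : ℝ) (hα0 : 0 < α) (a h : ℝ) (hh0 : 0 < h) (hh1 : h ≤ 1) :
    ∫ s in Set.Icc a (a + h), (Real.exp s - Real.exp a) ^ α ≤
      Real.exp (α * a) * (2 ^ α * (h ^ (1 + α) / (1 + α))) := by
  have hcont1 : Continuous fun s : ℝ => (Real.exp s - Real.exp a) ^ α :=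
    (Real.continuous_exp.sub continuous_const).rpow_const fun x => Or.inr hα0.le
  have hcont2 : Continuous fun s : ℝ => Real.exp (α * a) * 2 ^ α * (s - a) ^ α :=
    continuous_const.mul ((continuous_id.sub continuous_const).rpow_const
      fun x => Or.inr hα0.le)
  have hmono : ∀ s ∈ Set.Icc a (a + h),
      (Real.exp s - Real.exp a) ^ α ≤ Real.exp (α * a) * 2 ^ α * (s - a) ^ α := by
    intro s hs
    have hs1 : 0 ≤ s - a := by linarith [hs.1]
    have hs2 : s - a ≤ 1 := by linarith [hs.2]
    have key : Real.exp s - Real.exp a ≤ Real.exp a * (2 * (s - a)) := by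
      have h1 : Real.exp s = Real.exp a * Real.exp (s - a) := by
        rw [← Real.exp_add]; ring_nf
      have h2 := aux_exp_le (s - a) hs1 hs2
      nlinarith [Real.exp_pos a]
    have hnn : 0 ≤ Real.exp s - Real.exp a :=
      sub_nonneg.2 (Real.exp_le_exp.2 (by linarith [hs.1]))
    calc (Real.exp s - Real.exp a) ^ α ≤ (Real.exp a * (2 * (s - a))) ^ α :=
          Real.rpow_le_rpow hnn key hα0.le
      _ = Real.exp (α * a) * 2 ^ α * (s - a) ^ α := by
          rw [Real.mul_rpow (Real.exp_pos a).le (by positivity),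
            Real.mul_rpow (by norm_num) hs1, ← Real.exp_mul, mul_comm a α]
          ring
  have hint : ∫ s in Set.Icc a (a + h), (s - a) ^ α = h ^ (1 + α) / (1 + α) := by
    rw [integral_Icc_eq_integral_Ioc,
      ← intervalIntegral.integral_of_le (by linarith : a ≤ a + h)]
    have := intervalIntegral.integral_comp_sub_right (a := a) (b := a + h)
      (fun u : ℝ => u ^ α) a
    rw [this]
    simp only [sub_self, add_sub_cancel_left]
    rw [integral_rpow (Or.inl (by linarith : (-1 : ℝ) < α))]
    rw [Real.zero_rpow (by positivity : α + 1 ≠ 0)]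
    rw [add_comm α 1]
    ring
  calc ∫ s in Set.Icc a (a + h), (Real.exp s - Real.exp a) ^ α
      ≤ ∫ s in Set.Icc a (a + h), Real.exp (α * a) * 2 ^ α * (s - a) ^ α :=
        setIntegral_mono_on (hcont1.integrableOn_Icc) (hcont2.integrableOn_Icc)
          measurableSet_Icc hmono
    _ = Real.exp (α * a) * 2 ^ α * ∫ s in Set.Icc a (a + h), (s - a) ^ α := by
        rw [integral_const_mul]
    _ = Real.exp (α * a) * (2 ^ α * (h ^ (1 + α) / (1 + α))) := by
        rw [hint]; ring

/- auxiliary: geometric sum identity -/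
lemma aux_geom (α : ℝ) (hα0 : 0 < α) (ω Ω : ℕ) (hω : 0 < ω) :
    ∑ j ∈ Finset.Icc (-(ω * Ω : ℤ) + 1) 0, Real.exp (α * (((j : ℝ) - 1) / ω)) =
      (1 - Real.exp (-(α * Ω))) / (Real.exp (α / ω) - 1) := by
  have hωR : (0 : ℝ) < ω := by exact_mod_cast hω
  set r : ℝ := Real.exp (-(α / ω)) with hrdef
  have hr0 : 0 < r := Real.exp_pos _
  have hr1 : r < 1 := by
    rw [hrdef, Real.exp_lt_one_iff]
    have : 0 < α / ω := by positivity
    linarith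
  have hsum : ∑ j ∈ Finset.Icc (-(ω * Ω : ℤ) + 1) 0, Real.exp (α * (((j : ℝ) - 1) / ω)) =
      ∑ k ∈ Finset.range (ω * Ω), r ^ (k + 1) := by
    refine Finset.sum_nbij' (fun j : ℤ => (-j).toNat) (fun k : ℕ => -(k : ℤ)) ?_ ?_ ?_ ?_ ?_
    · intro j hj
      simp only [Finset.mem_Icc] at hj
      simp only [Finset.mem_range]
      omega
    · intro k hk
      simp only [Finset.mem_range] at hk
      simp only [Finset.mem_Icc]
      omega
    · intro j hj; simp only [Finset.mem_Icc] at hj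
      show -(((-j).toNat : ℤ)) = j
      omega
    · intro k hk; simp
    · intro j hj
      simp only [Finset.mem_Icc] at hj
      have hcast : (((-j).toNat + 1 : ℕ) : ℝ) = -(j : ℝ) + 1 := by
        have ht : ((-j).toNat : ℤ) = -j := Int.toNat_of_nonneg (by omega)
        have ht' : (((-j).toNat : ℕ) : ℝ) = -(j : ℝ) := by
          exact_mod_cast congrArg (Int.cast : ℤ → ℝ) ht
        push_cast
        rw [ht']
      rw [hrdef, ← Real.exp_nat_mul, hcast]
      congr 1
      field_simp
      ring
  rw [hsum]
  have hpow : ∀ k : ℕ, r ^ (k + 1) = r * r ^ k := fun k => by rw [pow_succ]; ring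
  rw [Finset.sum_congr rfl fun k _ => hpow k, ← Finset.mul_sum,
    geom_sum_eq (ne_of_lt hr1) (ω * Ω)]
  have hrn : r ^ (ω * Ω) = Real.exp (-(α * Ω)) := by
    rw [hrdef, ← Real.exp_nat_mul]
    congr 1
    push_cast
    field_simp
  have hE : Real.exp (α / ω) = r⁻¹ := by
    rw [hrdef, ← Real.exp_neg, neg_neg]
  rw [hrn.symm, hE]
  have h1 : r - 1 ≠ 0 := by intro h; nlinarith
  have h1' : (1 : ℝ) - r ≠ 0 := by intro h; nlinarith
  have h2 : r⁻¹ - 1 = (1 - r) / r := by field_simp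
  rw [h2, div_div_eq_mul_div,
    show (r ^ (ω * Ω) - 1) / (r - 1) = (1 - r ^ (ω * Ω)) / (1 - r) by
      rw [div_eq_div_iff h1 h1']; ring]
  rw [mul_div_assoc', mul_comm]

/- auxiliary: `∫_{-∞}^c e^{αs} ds = e^{αc}/α` -/
lemma aux_exp_int (α c : ℝ) (hα : 0 < α) :
    ∫ s in Set.Iic c, Real.exp (α * s) = Real.exp (α * c) / α := by
  have h1 : ∫ s in Set.Iic c, Real.exp (α * s)
      = ∫ s in Set.Iic c, (fun u : ℝ => Real.exp (-(α * u))) (-s) := by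
    congr 1; funext s; simp
  rw [h1, integral_comp_neg_Iic c (fun u : ℝ => Real.exp (-(α * u)))]
  have h2 : ∫ x in Set.Ioi (-c), Real.exp (-(α * x))
      = ∫ x in Set.Ioi (-c), (fun u : ℝ => Real.exp (-u)) (α * x) := by
    congr 1
  rw [h2, integral_comp_mul_left_Ioi (fun u : ℝ => Real.exp (-u)) (-c) hα,
    integral_exp_neg_Ioi]
  rw [smul_eq_mul]
  rw [show -(α * -c) = α * c by ring]
  ring

/-- refined simulation error bound of Example 5.1 for the
reverse Ornstein-Uhlenbeck kernel with λ = 1. -/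
theorem stmt_14 (α : ℝ) (hα0 : 0 < α) (hα2 : α ≤ 2)
    (g : ℝ → ℝ) (hg : ∀ x : ℝ, g x = if x ≤ 0 then Real.exp x else 0) :
    ∀ ω Ω : ℕ, 0 < ω → 0 < Ω →
      Eg α g ω Ω ≤
        (2 : ℝ) ^ α / (1 + α) *
            ((1 - Real.exp (-(α * Ω))) / (Real.exp (α / ω) - 1)) * (ω : ℝ) ^ (-(1 + α))
          + Real.exp (-(α * Ω)) / α := by
  intro ω Ω hω hΩ
  have hωR : (0 : ℝ) < ω := by exact_mod_cast hω
  have hΩR : (1 : ℝ) ≤ Ω := by exact_mod_cast hΩ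
  -- second sum is zero
  have hsum2 : ∀ j ∈ Finset.Icc (1 : ℤ) (ω * Ω : ℤ),
      (∫ s in Set.Icc (((j : ℝ) - 1) / ω) ((j : ℝ) / ω), |g ((j : ℝ) / ω) - g s| ^ α) = 0 := by
    intro j hj
    simp only [Finset.mem_Icc] at hj
    have hj1 : (1 : ℝ) ≤ (j : ℝ) := by exact_mod_cast hj.1
    have hgj : g ((j : ℝ) / ω) = 0 := by
      rw [hg]
      rw [if_neg]
      push_neg
      exact div_pos (by linarith) hωR
    have hae : ∀ᵐ s : ℝ, s ∈ Set.Icc (((j : ℝ) - 1) / ω) ((j : ℝ) / ω) →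
        |g ((j : ℝ) / ω) - g s| ^ α = 0 := by
      have h0 : ∀ᵐ s : ℝ, s ≠ (0 : ℝ) := by
        rw [ae_iff]
        simpa using Real.volume_singleton (a := 0)
      filter_upwards [h0] with s hs hmem
      have hslb : ((j : ℝ) - 1) / ω ≤ s := hmem.1
      have hs0 : 0 < s := by
        rcases lt_or_eq_of_le (le_trans (div_nonneg (by linarith) hωR.le) hslb)
          with h | h
        · exact h
        · exact absurd h.symm hs
      have hgs : g s = 0 := by rw [hg, if_neg (not_le.2 hs0)]
      rw [hgj, hgs]
      simp [Real.zero_rpow hα0.ne']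
    rw [setIntegral_congr_ae measurableSet_Icc hae]
    simp
  -- fourth integral is zero
  have hint4 : (∫ s in Set.Ici (Ω : ℝ), |g s| ^ α) = 0 := by
    have : ∀ s ∈ Set.Ici (Ω : ℝ), |g s| ^ α = 0 := by
      intro s hs
      have hs0 : ¬ s ≤ 0 := by
        simp only [Set.mem_Ici] at hs; linarith
      rw [hg, if_neg hs0]
      simp [Real.zero_rpow hα0.ne']
    rw [setIntegral_congr_fun measurableSet_Ici this]
    simp
  -- third integral
  have hint3 : (∫ s in Set.Iic (-(Ω : ℝ)), |g s| ^ α) = Real.exp (-(α * Ω)) / α := by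
    have hcg : ∀ s ∈ Set.Iic (-(Ω : ℝ)), |g s| ^ α = Real.exp (α * s) := by
      intro s hs
      simp only [Set.mem_Iic] at hs
      have hs0 : s ≤ 0 := by linarith
      rw [hg, if_pos hs0, abs_of_pos (Real.exp_pos s), ← Real.exp_mul, mul_comm s α]
    rw [setIntegral_congr_fun measurableSet_Iic hcg, aux_exp_int α _ hα0]
    rw [show α * -(Ω : ℝ) = -(α * Ω) by ring]
  -- first sum bound
  have hsum1 : (∑ j ∈ Finset.Icc (-(ω * Ω : ℤ) + 1) 0,
      ∫ s in Set.Icc (((j : ℝ) - 1) / ω) ((j : ℝ) / ω), |g (((j : ℝ) - 1) / ω) - g s| ^ α)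
      ≤ (2 : ℝ) ^ α / (1 + α) *
          ((1 - Real.exp (-(α * Ω))) / (Real.exp (α / ω) - 1)) * (ω : ℝ) ^ (-(1 + α)) := by
    have hterm : ∀ j ∈ Finset.Icc (-(ω * Ω : ℤ) + 1) 0,
        (∫ s in Set.Icc (((j : ℝ) - 1) / ω) ((j : ℝ) / ω), |g (((j : ℝ) - 1) / ω) - g s| ^ α)
          ≤ Real.exp (α * (((j : ℝ) - 1) / ω)) *
              (2 ^ α * ((1 / (ω : ℝ)) ^ (1 + α) / (1 + α))) := by
      intro j hj
      simp only [Finset.mem_Icc] at hj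
      have hjR : (j : ℝ) ≤ 0 := by exact_mod_cast hj.2
      set a : ℝ := ((j : ℝ) - 1) / ω with hadef
      have hb : (j : ℝ) / ω = a + 1 / ω := by rw [hadef]; field_simp; ring
      have ha0 : a ≤ 0 := by
        apply div_nonpos_of_nonpos_of_nonneg (by linarith) hωR.le
      have hcongr : ∀ s ∈ Set.Icc a (a + 1 / ω),
          |g a - g s| ^ α = (Real.exp s - Real.exp a) ^ α := by
        intro s hs
        have hsb : s ≤ 0 := by
          have := hs.2
          have : s ≤ (j : ℝ) / ω := by rw [hb]; exact hs.2
          have hj0 : (j : ℝ) / ω ≤ 0 := div_nonpos_of_nonpos_of_nonneg hjR hωR.le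
          linarith
        rw [hg a, hg s, if_pos ha0, if_pos hsb, abs_sub_comm,
          abs_of_nonneg (sub_nonneg.2 (Real.exp_le_exp.2 hs.1))]
      rw [hb, setIntegral_congr_fun measurableSet_Icc hcongr]
      exact aux_step α hα0 a (1 / ω) (by positivity) (by
        rw [div_le_one hωR]; exact_mod_cast hω)
    calc (∑ j ∈ Finset.Icc (-(ω * Ω : ℤ) + 1) 0,
        ∫ s in Set.Icc (((j : ℝ) - 1) / ω) ((j : ℝ) / ω), |g (((j : ℝ) - 1) / ω) - g s| ^ α)
        ≤ ∑ j ∈ Finset.Icc (-(ω * Ω : ℤ) + 1) 0, Real.exp (α * (((j : ℝ) - 1) / ω)) *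
            (2 ^ α * ((1 / (ω : ℝ)) ^ (1 + α) / (1 + α))) := Finset.sum_le_sum hterm
      _ = (∑ j ∈ Finset.Icc (-(ω * Ω : ℤ) + 1) 0, Real.exp (α * (((j : ℝ) - 1) / ω))) *
            (2 ^ α * ((1 / (ω : ℝ)) ^ (1 + α) / (1 + α))) := by
          rw [Finset.sum_mul]
      _ = (2 : ℝ) ^ α / (1 + α) *
            ((1 - Real.exp (-(α * Ω))) / (Real.exp (α / ω) - 1)) * (ω : ℝ) ^ (-(1 + α)) := by
          rw [aux_geom α hα0 ω Ω hω]
          rw [one_div, Real.inv_rpow hωR.le, ← Real.rpow_neg hωR.le]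
          ring
  have e2 : (∑ j ∈ Finset.Icc (1 : ℤ) (ω * Ω : ℤ),
      ∫ s in Set.Icc (((j : ℝ) - 1) / ω) ((j : ℝ) / ω), |g ((j : ℝ) / ω) - g s| ^ α) = 0 :=
    Finset.sum_eq_zero hsum2
  unfold Eg
  rw [e2, hint4, hint3]
  linarith [hsum1]
end

section
/- Let 0 < α ≤ 2 and 0 < H < 1 with H ≠ 1/α, and set d = H − 1/α. Then there is a constant C > 0 such that for all Ω ≥ 2, ∫_{Ω}^{∞} |x^{d} − (x−1)^{d}|^α dx ≤ C Ω^{−α(1−H)}. -/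
open MeasureTheory Filter Topology Set

/-- tail estimate for the linear fractional stable noise kernel
(Example 5.2). -/
theorem stmt_15 (α H : ℝ) (hα0 : 0 < α) (hα2 : α ≤ 2) (hH0 : 0 < H) (hH1 : H < 1)
    (hHα : H ≠ 1 / α) :
    ∃ C > (0:ℝ), ∀ Ω : ℝ, 2 ≤ Ω →
      (∫ x in Set.Ici Ω, |x ^ (H - 1 / α) - (x - 1) ^ (H - 1 / α)| ^ α) ≤
        C * Ω ^ (-(α * (1 - H))) := by
  set d := H - 1 / α with hd
  have hdne : d ≠ 0 := sub_ne_zero.mpr hHα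
  have hd1 : d - 1 ≤ 0 := by
    have : 0 < 1 / α := by positivity
    simp only [hd]; linarith
  set q : ℝ := (d - 1) * α with hq
  have hq1 : q < -1 := by
    have hα : α ≠ 0 := ne_of_gt hα0
    have : q = α * H - 1 - α := by rw [hq, hd, sub_mul, sub_mul, div_mul_cancel₀ 1 hα]; ring
    rw [this]
    nlinarith
  have hqα : q + 1 = -(α * (1 - H)) := by
    have hα : α ≠ 0 := ne_of_gt hα0
    rw [hq, hd, sub_mul, sub_mul, div_mul_cancel₀ 1 hα]; ring
  set K : ℝ := (|d| * 2 ^ (1 - d)) ^ α with hK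
  have hKpos : 0 < K := by
    have : 0 < |d| := abs_pos.mpr hdne
    positivity
  have hαH : 0 < α * (1 - H) := by nlinarith
  refine ⟨K / (α * (1 - H)), div_pos hKpos hαH, fun Ω hΩ => ?_⟩
  have hΩ0 : 0 < Ω := by linarith
  have key : ∀ x ∈ Set.Ioi Ω, |x ^ d - (x - 1) ^ d| ^ α ≤ K * x ^ q := by
    intro x hx
    have hx2 : 2 < x := lt_of_le_of_lt hΩ hx
    have hx0 : 0 < x := by linarith
    have hx1 : (1 : ℝ) ≤ x - 1 := by linarith
    have hx10 : 0 < x - 1 := by linarith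
    -- mean value estimate
    have mvt : |x ^ d - (x - 1) ^ d| ≤ |d| * (x - 1) ^ (d - 1) := by
      have hconv : Convex ℝ (Set.Icc (x - 1) x) := convex_Icc _ _
      have hderiv : ∀ t ∈ Set.Icc (x - 1) x,
          HasDerivWithinAt (fun y : ℝ => y ^ d) (d * t ^ (d - 1)) (Set.Icc (x - 1) x) t := by
        intro t ht
        have ht0 : t ≠ 0 := ne_of_gt (lt_of_lt_of_le hx10 ht.1)
        exact (Real.hasDerivAt_rpow_const (Or.inl ht0)).hasDerivWithinAt
      have hbound : ∀ t ∈ Set.Icc (x - 1) x, ‖d * t ^ (d - 1)‖ ≤ |d| * (x - 1) ^ (d - 1) := by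
        intro t ht
        have ht0 : 0 < t := lt_of_lt_of_le hx10 ht.1
        rw [norm_mul, Real.norm_eq_abs, Real.norm_eq_abs,
          abs_of_nonneg (Real.rpow_nonneg ht0.le _)]
        exact mul_le_mul_of_nonneg_left
          (Real.rpow_le_rpow_of_nonpos hx10 ht.1 hd1) (abs_nonneg d)
      have := hconv.norm_image_sub_le_of_norm_hasDerivWithin_le hderiv hbound
        (Set.right_mem_Icc.mpr (by linarith)) (Set.left_mem_Icc.mpr (by linarith))
      simpa [abs_sub_comm] using this
    have h2 : (x - 1) ^ (d - 1) ≤ (x / 2) ^ (d - 1) := by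
      refine Real.rpow_le_rpow_of_nonpos (by linarith) (by linarith) hd1
    have h3 : (x / 2) ^ (d - 1) = 2 ^ (1 - d) * x ^ (d - 1) := by
      rw [Real.div_rpow hx0.le (by norm_num), div_eq_mul_inv,
        ← Real.rpow_neg (by norm_num), neg_sub, mul_comm]
    have habs : |x ^ d - (x - 1) ^ d| ≤ |d| * 2 ^ (1 - d) * x ^ (d - 1) := by
      calc |x ^ d - (x - 1) ^ d| ≤ |d| * (x - 1) ^ (d - 1) := mvt
        _ ≤ |d| * (2 ^ (1 - d) * x ^ (d - 1)) := by
            rw [← h3]; exact mul_le_mul_of_nonneg_left h2 (abs_nonneg d)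
        _ = |d| * 2 ^ (1 - d) * x ^ (d - 1) := by ring
    calc |x ^ d - (x - 1) ^ d| ^ α
        ≤ (|d| * 2 ^ (1 - d) * x ^ (d - 1)) ^ α :=
          Real.rpow_le_rpow (abs_nonneg _) habs hα0.le
      _ = K * x ^ q := by
          rw [hK, hq, Real.mul_rpow (by positivity) (Real.rpow_nonneg hx0.le _),
            ← Real.rpow_mul hx0.le]
  rw [MeasureTheory.integral_Ici_eq_integral_Ioi]
  have hint : IntegrableOn (fun x : ℝ => K * x ^ q) (Set.Ioi Ω) :=
    (integrableOn_Ioi_rpow_of_lt hq1 hΩ0).const_mul K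
  calc (∫ x in Set.Ioi Ω, |x ^ d - (x - 1) ^ d| ^ α)
      ≤ ∫ x in Set.Ioi Ω, K * x ^ q := by
        refine integral_mono_of_nonneg ?_ hint ?_
        · exact Filter.Eventually.of_forall fun x => Real.rpow_nonneg (abs_nonneg _) α
        · exact (ae_restrict_iff' measurableSet_Ioi).mpr (Filter.Eventually.of_forall key)
    _ = K * ∫ x in Set.Ioi Ω, x ^ q := integral_const_mul K _
    _ = K * (-Ω ^ (q + 1) / (q + 1)) := by rw [integral_Ioi_rpow_of_lt hq1 hΩ0]
    _ = K / (α * (1 - H)) * Ω ^ (-(α * (1 - H))) := by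
        rw [hqα]
        field_simp
end

section
/- Let γ ∈ (−1, 0) and define g : ℝ \ {0} → ℝ by g(x) = 2(γ+1)|x|^γ ∫_{|x|}^{∞} v^{−γ−2} sin v dv − 2 x^{−1} sin x. Then there exists a constant C > 0 such that |g(x)| ≤ C/|x| for all x ≠ 0 (the paper asserts this with C = 4). -/
open MeasureTheory Filter Topology Set

/-- decay bound for the kernel of Example 3.2. -/
theorem stmt_17 (γ : ℝ) (hγ1 : -1 < γ) (hγ2 : γ < 0) (g : ℝ → ℝ)
    (hg : ∀ x : ℝ, x ≠ 0 → g x =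
      2 * (γ + 1) * |x| ^ γ * (∫ v in Set.Ioi |x|, v ^ (-γ - 2) * Real.sin v)
        - 2 * x⁻¹ * Real.sin x) :
    ∃ C > (0:ℝ), ∀ x : ℝ, x ≠ 0 → |g x| ≤ C / |x| := by
  refine ⟨4, by norm_num, fun x hx => ?_⟩
  have ha : (0:ℝ) < |x| := abs_pos.mpr hx
  have hp : (-γ - 2 : ℝ) < -1 := by linarith
  have hγp : (0:ℝ) < γ + 1 := by linarith
  have hint : IntegrableOn (fun v : ℝ => v ^ (-γ - 2)) (Ioi |x|) :=
    integrableOn_Ioi_rpow_of_lt hp ha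
  have hintf : IntegrableOn (fun v : ℝ => v ^ (-γ - 2) * Real.sin v) (Ioi |x|) := by
    refine hint.mono' ?_ ?_
    · exact (Measurable.aestronglyMeasurable (by measurability))
    · filter_upwards [ae_restrict_mem measurableSet_Ioi] with v hv
      have hv0 : 0 < v := lt_trans ha hv
      rw [norm_mul, Real.norm_rpow_of_nonneg hv0.le, Real.norm_eq_abs v,
        abs_of_pos hv0]
      calc v ^ (-γ - 2) * ‖Real.sin v‖ ≤ v ^ (-γ - 2) * 1 := by
            exact mul_le_mul_of_nonneg_left
              (by rw [Real.norm_eq_abs]; exact Real.abs_sin_le_one v)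
              (Real.rpow_nonneg hv0.le _)
        _ = v ^ (-γ - 2) := mul_one _
  have hIval : (∫ v in Ioi |x|, v ^ (-γ - 2)) = |x| ^ (-γ - 1) / (γ + 1) := by
    rw [integral_Ioi_rpow_of_lt hp ha]
    have : (-γ - 2 : ℝ) + 1 = -γ - 1 := by ring
    rw [this, show (-γ - 1 : ℝ) = -(γ+1) from by ring, div_neg, neg_div, neg_neg]
  have hIbound : |∫ v in Ioi |x|, v ^ (-γ - 2) * Real.sin v|
      ≤ |x| ^ (-γ - 1) / (γ + 1) := by
    rw [← hIval]
    calc |∫ v in Ioi |x|, v ^ (-γ - 2) * Real.sin v|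
        ≤ ∫ v in Ioi |x|, |v ^ (-γ - 2) * Real.sin v| :=
          (by simpa only [Real.norm_eq_abs] using norm_integral_le_integral_norm (μ := volume.restrict (Ioi |x|)) (fun v => v ^ (-γ - 2) * Real.sin v))
      _ ≤ ∫ v in Ioi |x|, v ^ (-γ - 2) := by
          refine setIntegral_mono_on hintf.abs hint measurableSet_Ioi ?_
          intro v hv
          have hv0 : 0 < v := lt_trans ha hv
          rw [abs_mul, abs_of_pos (Real.rpow_pos_of_pos hv0 _)]
          calc v ^ (-γ - 2) * |Real.sin v| ≤ v ^ (-γ - 2) * 1 :=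
                mul_le_mul_of_nonneg_left (Real.abs_sin_le_one v)
                  (Real.rpow_nonneg hv0.le _)
            _ = v ^ (-γ - 2) := mul_one _
  have hpow : |x| ^ γ * (|x| ^ (-γ - 1)) = |x|⁻¹ := by
    rw [← Real.rpow_add ha]
    have : γ + (-γ - 1) = -1 := by ring
    rw [this, Real.rpow_neg_one]
  have h1 : |2 * (γ + 1) * |x| ^ γ * (∫ v in Ioi |x|, v ^ (-γ - 2) * Real.sin v)|
      ≤ 2 / |x| := by
    rw [abs_mul]
    have hc : |2 * (γ + 1) * |x| ^ γ| = 2 * (γ + 1) * |x| ^ γ := by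
      rw [abs_of_pos]
      positivity
    rw [hc]
    calc 2 * (γ + 1) * |x| ^ γ * |∫ v in Ioi |x|, v ^ (-γ - 2) * Real.sin v|
        ≤ 2 * (γ + 1) * |x| ^ γ * (|x| ^ (-γ - 1) / (γ + 1)) := by
          refine mul_le_mul_of_nonneg_left hIbound ?_
          positivity
      _ = 2 / |x| := by
          rw [div_eq_mul_inv, show 2 * (γ + 1) * |x| ^ γ * (|x| ^ (-γ - 1) * (γ + 1)⁻¹)
            = 2 * ((γ + 1) * (γ + 1)⁻¹) * (|x| ^ γ * |x| ^ (-γ - 1)) from by ring,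
            mul_inv_cancel₀ (ne_of_gt hγp), hpow]
          rw [div_eq_mul_inv, mul_one]
  have h2 : |2 * x⁻¹ * Real.sin x| ≤ 2 / |x| := by
    rw [abs_mul, abs_mul, abs_two, abs_inv]
    calc 2 * |x|⁻¹ * |Real.sin x| ≤ 2 * |x|⁻¹ * 1 :=
          mul_le_mul_of_nonneg_left (Real.abs_sin_le_one x) (by positivity)
      _ = 2 / |x| := by rw [mul_one, div_eq_mul_inv]
  rw [hg x hx]
  calc |2 * (γ + 1) * |x| ^ γ * (∫ v in Ioi |x|, v ^ (-γ - 2) * Real.sin v)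
        - 2 * x⁻¹ * Real.sin x|
      ≤ |2 * (γ + 1) * |x| ^ γ * (∫ v in Ioi |x|, v ^ (-γ - 2) * Real.sin v)|
        + |2 * x⁻¹ * Real.sin x| := abs_sub _ _
    _ ≤ 2 / |x| + 2 / |x| := add_le_add h1 h2
    _ = 4 / |x| := by ring
end
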